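/- arXiv:1807.07032 — 5 statements merged into one kernel-verified Lean document; each statement's English description precedes it below -/
import Mathlib

section
/- Let H be a real normed space, let (x*_k)_{k≥0} be points of H with ‖x*_k − x*_{k−1}‖ ≤ K for all k ≥ 1, and for each k ≥ 1 let T_k : H → H be a map satisfying ‖T_k(x) − x*_k‖ ≤ r·‖x − x*_k‖ for all x ∈ H, where 0 ≤ r < 1. If x_k = T_k(x_{k−1}) for all k ≥ 1, then limsup_{k→∞} ‖x_k − x*_k‖ ≤ r·K/(1 − r). -/
/-- Theorem 1, asymptotic form: if the optimizers drift by at most `K` per step, and each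
map `T k` (for `k ≥ 1`) contracts toward the optimizer `xs k` with factor `0 ≤ r < 1`, then
the running iterates `x k = T k (x (k-1))` track the optimizer trajectory up to an asymptotic
error ball of radius `r * K / (1 - r)`. -/
theorem running_asymptotic_tracking_bound
    {H : Type*} [NormedAddCommGroup H] [NormedSpace ℝ H]
    (K r : ℝ) (hr0 : 0 ≤ r) (hr1 : r < 1)
    (xs : ℕ → H) (hK : ∀ k : ℕ, 1 ≤ k → ‖xs k - xs (k - 1)‖ ≤ K)
    (T : ℕ → H → H)
    (hT : ∀ k : ℕ, 1 ≤ k → ∀ x : H, ‖T k x - xs k‖ ≤ r * ‖x - xs k‖)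
    (x : ℕ → H) (hx : ∀ k : ℕ, 1 ≤ k → x k = T k (x (k - 1))) :
    Filter.limsup (fun k => ‖x k - xs k‖) Filter.atTop ≤ r * K / (1 - r) := by
  set c : ℝ := r * K / (1 - r) with hc
  have h1r : (0:ℝ) < 1 - r := by linarith
  have hKnn : 0 ≤ K := le_trans (norm_nonneg _) (hK 1 le_rfl)
  have hcnn : 0 ≤ c := div_nonneg (mul_nonneg hr0 hKnn) h1r.le
  -- recursive bound
  have hrec : ∀ k : ℕ, 1 ≤ k → ‖x k - xs k‖ ≤ r * ‖x (k-1) - xs (k-1)‖ + r * K := by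
    intro k hk
    have h1 : ‖x k - xs k‖ ≤ r * ‖x (k-1) - xs k‖ := by
      rw [hx k hk]; exact hT k hk _
    have h2 : ‖x (k-1) - xs k‖ ≤ ‖x (k-1) - xs (k-1)‖ + ‖xs k - xs (k-1)‖ := by
      have := norm_sub_le_norm_sub_add_norm_sub (x (k-1)) (xs (k-1)) (xs k)
      calc ‖x (k-1) - xs k‖ ≤ ‖x (k-1) - xs (k-1)‖ + ‖xs (k-1) - xs k‖ := this
        _ = ‖x (k-1) - xs (k-1)‖ + ‖xs k - xs (k-1)‖ := by
              congr 1; exact norm_sub_rev _ _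
    have h3 : ‖x (k-1) - xs k‖ ≤ ‖x (k-1) - xs (k-1)‖ + K :=
      h2.trans (by linarith [hK k hk])
    calc ‖x k - xs k‖ ≤ r * ‖x (k-1) - xs k‖ := h1
      _ ≤ r * (‖x (k-1) - xs (k-1)‖ + K) := by
          exact mul_le_mul_of_nonneg_left h3 hr0
      _ = r * ‖x (k-1) - xs (k-1)‖ + r * K := by ring
  -- inductive bound: e_k ≤ r^k * e_0 + c
  have hbound : ∀ k : ℕ, ‖x k - xs k‖ ≤ r ^ k * ‖x 0 - xs 0‖ + c := by
    intro k
    induction k with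
    | zero => simp [hcnn]
    | succ n ih =>
        have hk1 : 1 ≤ n + 1 := Nat.le_add_left 1 n
        have := hrec (n+1) hk1
        simp only [Nat.add_sub_cancel] at this
        have hrK : r * K = (1 - r) * c := by
          rw [hc, mul_div_assoc']; exact (mul_div_cancel_left₀ _ h1r.ne').symm
        calc ‖x (n+1) - xs (n+1)‖ ≤ r * ‖x n - xs n‖ + r * K := this
          _ ≤ r * (r ^ n * ‖x 0 - xs 0‖ + c) + r * K :=
              by linarith [mul_le_mul_of_nonneg_left ih hr0]
          _ = r ^ (n+1) * ‖x 0 - xs 0‖ + (r * c + r * K) := by ring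
          _ ≤ r ^ (n+1) * ‖x 0 - xs 0‖ + c := by
              rw [hrK]; nlinarith
  -- limsup comparison
  have htend : Filter.Tendsto (fun k => r ^ k * ‖x 0 - xs 0‖ + c) Filter.atTop (nhds c) := by
    have h0 : Filter.Tendsto (fun k : ℕ => r ^ k * ‖x 0 - xs 0‖) Filter.atTop (nhds 0) := by
      simpa using (tendsto_pow_atTop_nhds_zero_of_lt_one hr0 hr1).mul_const ‖x 0 - xs 0‖
    simpa using h0.add tendsto_const_nhds
  have hls : Filter.limsup (fun k => r ^ k * ‖x 0 - xs 0‖ + c) Filter.atTop = c :=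
    htend.limsup_eq
  calc Filter.limsup (fun k => ‖x k - xs k‖) Filter.atTop
      ≤ Filter.limsup (fun k => r ^ k * ‖x 0 - xs 0‖ + c) Filter.atTop := by
        refine Filter.limsup_le_limsup (Filter.Eventually.of_forall hbound) ?_ ?_
        · exact Filter.IsBoundedUnder.isCoboundedUnder_le ⟨0, Filter.eventually_map.2 (Filter.Eventually.of_forall fun k => norm_nonneg _)⟩
        · exact htend.isBoundedUnder_le
    _ = c := hls
end

section
/- Let H be a real inner product space and f : H → ℝ be m-strongly convex and L-strongly smooth with 0 < m ≤ L. For any stepsize α with 0 < α < 2/L, the gradient-step map x ↦ x − α·∇f(x) is Lipschitz with constant ρ = max{|1 − α m|, |1 − α L|}, i.e., ‖(x − α∇f(x)) − (y − α∇f(y))‖ ≤ ρ·‖x − y‖ for all x, y ∈ H; moreover ρ < 1. -/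
open scoped RealInnerProductSpace

section AuxGradientStep

variable {H : Type*} [NormedAddCommGroup H] [InnerProductSpace ℝ H]

lemma sqDeriv (c : ℝ) (p : H) :
    HasFDerivAt (fun x : H => c * ‖x‖ ^ 2) (innerSL ℝ ((2 * c) • p)) p := by
  have h0 := ((hasFDerivAt_id p).inner ℝ (hasFDerivAt_id p)).const_mul c
  have hfun : (fun x : H => c * ‖x‖ ^ 2) = fun x : H => c * ⟪id x, id x⟫ := by
    funext x; rw [real_inner_self_eq_norm_sq]; rfl
  rw [hfun]
  refine h0.congr_fderiv ?_
  apply ContinuousLinearMap.ext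
  intro v
  simp [fderivInnerCLM_apply, real_inner_smul_left, real_inner_comm]
  ring

lemma line_hasDerivAt (φ : H → ℝ) (φ' : H → H)
    (hdiff : ∀ p : H, HasFDerivAt φ (innerSL ℝ (φ' p)) p) (x d : H) (t : ℝ) :
    HasDerivAt (fun s : ℝ => φ (x + s • d)) ⟪φ' (x + t • d), d⟫ t := by
  have hc : HasDerivAt (fun s : ℝ => x + s • d) d t := by
    simpa using ((hasDerivAt_id t).smul_const d).const_add x
  have := (hdiff (x + t • d)).comp_hasDerivAt t hc
  exact this

lemma convexOn_of_monotone_grad (φ : H → ℝ) (φ' : H → H)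
    (hdiff : ∀ p : H, HasFDerivAt φ (innerSL ℝ (φ' p)) p)
    (hmono : ∀ p q : H, 0 ≤ ⟪φ' p - φ' q, p - q⟫) :
    ConvexOn ℝ Set.univ φ := by
  refine ⟨convex_univ, fun x _ y _ a b ha hb hab => ?_⟩
  set d := y - x with hd
  set ψ := fun t : ℝ => φ (x + t • d) with hψ
  have hψd : ∀ t : ℝ, HasDerivAt ψ ⟪φ' (x + t • d), d⟫ t :=
    fun t => line_hasDerivAt φ φ' hdiff x d t
  have hdiffψ : Differentiable ℝ ψ := fun t => (hψd t).differentiableAt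
  have hderiv : deriv ψ = fun t => ⟪φ' (x + t • d), d⟫ := funext fun t => (hψd t).deriv
  have hmonoψ : Monotone (deriv ψ) := by
    rw [hderiv]
    intro s t hst
    rcases eq_or_lt_of_le hst with rfl | hlt
    · exact le_rfl
    · have h := hmono (x + t • d) (x + s • d)
      have hdiffpt : (x + t • d) - (x + s • d) = (t - s) • d := by
        rw [sub_smul]; abel
      rw [hdiffpt, inner_sub_left, real_inner_smul_right, real_inner_smul_right] at h
      have hts : 0 < t - s := sub_pos.2 hlt
      show ⟪φ' (x + s • d), d⟫ ≤ ⟪φ' (x + t • d), d⟫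
      nlinarith [h]
  have hconvψ := hmonoψ.convexOn_univ_of_deriv hdiffψ
  have h := hconvψ.2 (Set.mem_univ (0:ℝ)) (Set.mem_univ (1:ℝ)) ha hb hab
  simp only [smul_eq_mul, mul_zero, mul_one, zero_add, hψ] at h
  have e0 : x + (0:ℝ) • d = x := by simp
  have e1 : x + (1:ℝ) • d = y := by rw [one_smul, hd]; abel
  have eb : x + b • d = a • x + b • y := by
    rw [hd, smul_sub]
    have : a = 1 - b := by linarith
    rw [this, sub_smul, one_smul]; abel
  rw [e0, e1, eb] at h
  simpa using h

lemma tangent_le (φ : H → ℝ) (φ' : H → H)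
    (hdiff : ∀ p : H, HasFDerivAt φ (innerSL ℝ (φ' p)) p)
    (hconv : ConvexOn ℝ Set.univ φ) (x y : H) :
    φ x + ⟪φ' x, y - x⟫ ≤ φ y := by
  set d := y - x with hd
  set ψ := fun t : ℝ => φ (x + t • d) with hψ
  have hψc : ConvexOn ℝ Set.univ ψ := by
    have := hconv.comp_affineMap (AffineMap.lineMap x y : ℝ →ᵃ[ℝ] H)
    have he : (φ ∘ (AffineMap.lineMap x y : ℝ →ᵃ[ℝ] H)) = ψ := by
      funext t
      simp [hψ, AffineMap.lineMap_apply, hd, add_comm]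
    rw [he] at this
    simpa using this
  have hder : HasDerivAt ψ ⟪φ' x, d⟫ 0 := by
    have := line_hasDerivAt φ φ' hdiff x d 0
    simpa using this
  have hs := hψc.le_slope_of_hasDerivAt (Set.mem_univ (0:ℝ)) (Set.mem_univ (1:ℝ)) one_pos hder
  have hslope : slope ψ 0 1 = ψ 1 - ψ 0 := by
    rw [slope_def_field]; simp
  rw [hslope] at hs
  have e0 : ψ 0 = φ x := by simp [hψ]
  have e1 : ψ 1 = φ y := by
    simp only [hψ, one_smul, hd]
    congr 1
    abel
  rw [e0, e1] at hs
  linarith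


lemma expandInner (a b c : H) (t : ℝ) : ⟪a, b + t • c⟫ = ⟪a, b⟫ + t * ⟪a, c⟫ := by
  rw [inner_add_right, real_inner_smul_right]

lemma expandNorm (b c : H) (t : ℝ) :
    ‖b + t • c‖ ^ 2 = ‖b‖ ^ 2 + 2 * (t * ⟪b, c⟫) + t ^ 2 * ‖c‖ ^ 2 := by
  rw [norm_add_sq_real, real_inner_smul_right, norm_smul, Real.norm_eq_abs, mul_pow, sq_abs]

lemma key0 (m L : ℝ) (hm : 0 < m) (hmL : m ≤ L)
    (f : H → ℝ) (f' : H → H)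
    (D1 : ∀ a b : H, f a + ⟪f' a, b - a⟫ + m / 2 * ‖b - a‖ ^ 2 ≤ f b)
    (D2 : ∀ a b : H, f b ≤ f a + ⟪f' a, b - a⟫ + L / 2 * ‖b - a‖ ^ 2)
    (x y : H) :
    ‖(f' y - f' x) - m • (y - x)‖ ^ 2
      ≤ (L - m) * ⟪(f' y - f' x) - m • (y - x), y - x⟫ := by
  set v : H := (f' y - f' x) - m • (y - x) with hv
  have hvsum : f' y - f' x = v + m • (y - x) := by rw [hv]; abel
  have step : ∀ t : ℝ,
      2 * t * ‖v‖ ^ 2 - (L - m) * t ^ 2 * ‖v‖ ^ 2 ≤ ⟪v, y - x⟫ := by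
    intro t
    have h1 := D1 x (y + (-t) • v)
    have h2 := D2 y (y + (-t) • v)
    have h3 := D1 y (x + t • v)
    have h4 := D2 x (x + t • v)
    have e1 : (y + (-t) • v) - x = (y - x) + (-t) • v := by abel
    have e2 : (y + (-t) • v) - y = (-t) • v := by abel
    have e3 : (x + t • v) - y = (x - y) + t • v := by abel
    have e4 : (x + t • v) - x = t • v := by abel
    rw [e1, expandInner, expandNorm] at h1
    rw [e2, real_inner_smul_right, norm_smul, Real.norm_eq_abs, mul_pow, sq_abs] at h2
    rw [e3, expandInner, expandNorm] at h3
    rw [e4, real_inner_smul_right, norm_smul, Real.norm_eq_abs, mul_pow, sq_abs] at h4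
    have hxy : x - y = -(y - x) := by abel
    have c1 : ⟪f' y, x - y⟫ = -⟪f' y, y - x⟫ := by rw [hxy, inner_neg_right]
    have c2 : ‖x - y‖ = ‖y - x‖ := norm_sub_rev _ _
    have c3 : ⟪x - y, v⟫ = -⟪y - x, v⟫ := by rw [hxy, inner_neg_left]
    rw [c1, c2, c3] at h3
    have c4 : ⟪f' y, v⟫ = ⟪f' x, v⟫ + (‖v‖ ^ 2 + m * ⟪y - x, v⟫) := by
      have h5 : ⟪f' y, v⟫ - ⟪f' x, v⟫ = ⟪v, v⟫ + m * ⟪y - x, v⟫ := by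
        rw [← inner_sub_left, hvsum, inner_add_left, real_inner_smul_left]
      rw [real_inner_self_eq_norm_sq] at h5
      linarith
    rw [c4] at h2 h3
    have c6 : ⟪f' y, y - x⟫ = ⟪f' x, y - x⟫ + (⟪y - x, v⟫ + m * ‖y - x‖ ^ 2) := by
      have h5 : ⟪f' y, y - x⟫ - ⟪f' x, y - x⟫ = ⟪v, y - x⟫ + m * ⟪y - x, y - x⟫ := by
        rw [← inner_sub_left, hvsum, inner_add_left, real_inner_smul_left]
      rw [real_inner_self_eq_norm_sq] at h5
      have hcomm : ⟪v, y - x⟫ = ⟪y - x, v⟫ := real_inner_comm _ _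
      linarith
    rw [c6] at h3
    have hcomm : ⟪v, y - x⟫ = ⟪y - x, v⟫ := real_inner_comm _ _
    rw [hcomm]
    nlinarith [h1, h2, h3, h4]
  rcases eq_or_lt_of_le hmL with rfl | hlt
  · have hV : ‖v‖ ^ 2 ≤ 0 := by
      by_contra hc
      push_neg at hc
      have h := step ((⟪v, y - x⟫ + 1) / (2 * ‖v‖ ^ 2))
      have hne : ‖v‖ ^ 2 ≠ 0 := ne_of_gt hc
      have he : 2 * ((⟪v, y - x⟫ + 1) / (2 * ‖v‖ ^ 2)) * ‖v‖ ^ 2 = ⟪v, y - x⟫ + 1 := by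
        have hv0 : ‖v‖ ≠ 0 := fun h0 => hne (by rw [h0]; ring)
        field_simp
      nlinarith [h]
    have hV0 : 0 ≤ ‖v‖ ^ 2 := sq_nonneg _
    have hVe : ‖v‖ ^ 2 = 0 := le_antisymm hV hV0
    rw [hVe]
    simp
  · have hM : 0 < L - m := sub_pos.2 hlt
    have h := step (L - m)⁻¹
    have e : 2 * (L - m)⁻¹ * ‖v‖ ^ 2 - (L - m) * ((L - m)⁻¹) ^ 2 * ‖v‖ ^ 2
        = (L - m)⁻¹ * ‖v‖ ^ 2 := by
      field_simp
      ring
    rw [e] at h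
    calc ‖v‖ ^ 2 = (L - m) * ((L - m)⁻¹ * ‖v‖ ^ 2) := by field_simp
      _ ≤ (L - m) * ⟪v, y - x⟫ := mul_le_mul_of_nonneg_left h hM.le

end AuxGradientStep


lemma final_arith (m L α G a r T ρ : ℝ) (hm : 0 < m) (hmL : m ≤ L) (hα : 0 < α)
    (hkey : m * L * r ^ 2 + a ^ 2 ≤ (m + L) * G) (hcs : G ≤ a * r) (hlipa : a ≤ L * r)
    (hr : 0 ≤ r) (ha : 0 ≤ a)
    (hT : T ^ 2 = r ^ 2 - 2 * (α * G) + α ^ 2 * a ^ 2) (hT0 : 0 ≤ T)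
    (hρm : |1 - α * m| ≤ ρ) (hρL : |1 - α * L| ≤ ρ) (hρ0 : 0 ≤ ρ) :
    T ≤ ρ * r := by
  have hL : 0 < L := lt_of_lt_of_le hm hmL
  have hNL : a ^ 2 ≤ L ^ 2 * r ^ 2 := by nlinarith
  have hsq : T ^ 2 ≤ ρ ^ 2 * r ^ 2 := by
    rcases le_total (α * (m + L)) 2 with hc | hc
    · have h1 : (1 - α * m) ^ 2 ≤ ρ ^ 2 := by
        rw [← sq_abs (1 - α * m)]
        exact pow_le_pow_left₀ (abs_nonneg _) hρm 2
      have hfac : (a - m * r) * (a - L * r) ≤ 0 := by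
        nlinarith [mul_le_mul_of_nonneg_left hcs (by positivity : (0:ℝ) ≤ m + L)]
      have hNm : m ^ 2 * r ^ 2 ≤ a ^ 2 := by
        rcases le_or_gt (m * r) a with hle | hgt
        · nlinarith [mul_nonneg hm.le hr]
        · exfalso
          have hml : m * r ≤ L * r := mul_le_mul_of_nonneg_right hmL hr
          nlinarith
      have hP1 : 0 ≤ α * ((m + L) * G - m * L * r ^ 2 - a ^ 2) :=
        mul_nonneg hα.le (by linarith)
      have hP2 : 0 ≤ (α * (2 - α * (m + L))) * (a ^ 2 - m ^ 2 * r ^ 2) :=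
        mul_nonneg (mul_nonneg hα.le (by linarith)) (by linarith)
      have hmain : (m + L) * T ^ 2 ≤ (m + L) * ((1 - α * m) ^ 2 * r ^ 2) := by
        rw [hT]; nlinarith
      have h2 := le_of_mul_le_mul_left hmain (by positivity : (0:ℝ) < m + L)
      calc T ^ 2 ≤ (1 - α * m) ^ 2 * r ^ 2 := h2
        _ ≤ ρ ^ 2 * r ^ 2 := mul_le_mul_of_nonneg_right h1 (sq_nonneg _)
    · have h1 : (1 - α * L) ^ 2 ≤ ρ ^ 2 := by
        rw [← sq_abs (1 - α * L)]
        exact pow_le_pow_left₀ (abs_nonneg _) hρL 2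
      have hP1 : 0 ≤ α * ((m + L) * G - m * L * r ^ 2 - a ^ 2) :=
        mul_nonneg hα.le (by linarith)
      have hP2 : 0 ≤ (α * (α * (m + L) - 2)) * (L ^ 2 * r ^ 2 - a ^ 2) :=
        mul_nonneg (mul_nonneg hα.le (by linarith)) (by linarith)
      have hmain : (m + L) * T ^ 2 ≤ (m + L) * ((1 - α * L) ^ 2 * r ^ 2) := by
        rw [hT]; nlinarith
      have h2 := le_of_mul_le_mul_left hmain (by positivity : (0:ℝ) < m + L)
      calc T ^ 2 ≤ (1 - α * L) ^ 2 * r ^ 2 := h2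
        _ ≤ ρ ^ 2 * r ^ 2 := mul_le_mul_of_nonneg_right h1 (sq_nonneg _)
  have hsq' : T ^ 2 ≤ (ρ * r) ^ 2 := by rw [mul_pow]; exact hsq
  exact (pow_le_pow_iff_left₀ hT0 (by positivity) (by norm_num)).mp hsq'

/-- Contraction of the gradient step: if `f` is `m`-strongly convex and `L`-strongly
smooth (differentiable with `L`-Lipschitz gradient `f'`) on a real inner product space,
`0 < m ≤ L`, and `0 < α < 2/L`, then `x ↦ x - α • f' x` is Lipschitz with constant
`ρ = max |1 - α*m| |1 - α*L|`, and `ρ < 1`. -/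
theorem gradient_step_contraction
    {H : Type*} [NormedAddCommGroup H] [InnerProductSpace ℝ H]
    (m L α : ℝ) (hm : 0 < m) (hmL : m ≤ L) (hα : 0 < α) (hα2 : α < 2 / L)
    (f : H → ℝ) (f' : H → H)
    (hdiff : ∀ x : H, HasFDerivAt f (innerSL ℝ (f' x)) x)
    (hsc : ConvexOn ℝ Set.univ (fun x => f x - m / 2 * ‖x‖ ^ 2))
    (hLip : ∀ x y : H, ‖f' x - f' y‖ ≤ L * ‖x - y‖) :
    (∀ x y : H, ‖(x - α • f' x) - (y - α • f' y)‖
        ≤ max |1 - α * m| |1 - α * L| * ‖x - y‖)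
      ∧ max |1 - α * m| |1 - α * L| < 1 := by
  have hL : 0 < L := lt_of_lt_of_le hm hmL
  have hαL : α * L < 2 := by
    rw [lt_div_iff₀ hL] at hα2; linarith
  have hαm : 0 < α * m := mul_pos hα hm
  have hαm2 : α * m ≤ α * L := mul_le_mul_of_nonneg_left hmL hα.le
  have hhd : ∀ p : H, HasFDerivAt (fun x => f x - m / 2 * ‖x‖ ^ 2)
      (innerSL ℝ (f' p - m • p)) p := by
    intro p
    have em : (2 * (m / 2) : ℝ) = m := by ring
    have e : innerSL ℝ (f' p - m • p)
        = innerSL ℝ (f' p) - innerSL ℝ ((2 * (m / 2)) • p) := by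
      rw [em, map_sub]
    rw [e]
    exact (hdiff p).sub (sqDeriv (m / 2) p)
  have hqd : ∀ p : H, HasFDerivAt (fun x => L / 2 * ‖x‖ ^ 2 - f x)
      (innerSL ℝ (L • p - f' p)) p := by
    intro p
    have em : (2 * (L / 2) : ℝ) = L := by ring
    have e : innerSL ℝ (L • p - f' p)
        = innerSL ℝ ((2 * (L / 2)) • p) - innerSL ℝ (f' p) := by
      rw [em, map_sub]
    rw [e]
    exact (sqDeriv (L / 2) p).sub (hdiff p)
  have ht := tangent_le _ _ hhd hsc
  have D1 : ∀ a b : H, f a + ⟪f' a, b - a⟫ + m / 2 * ‖b - a‖ ^ 2 ≤ f b := by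
    intro a b
    have h := ht a b
    simp only [inner_sub_left, real_inner_smul_left] at h
    have e1 : ‖b - a‖ ^ 2 = ‖b‖ ^ 2 - 2 * ⟪a, b⟫ + ‖a‖ ^ 2 := by
      rw [norm_sub_sq_real, real_inner_comm]
    have e2 : ⟪a, b - a⟫ = ⟪a, b⟫ - ‖a‖ ^ 2 := by
      rw [inner_sub_right, real_inner_self_eq_norm_sq]
    rw [e2] at h
    rw [e1]
    linarith
  have hqm : ∀ p r : H, 0 ≤ ⟪(L • p - f' p) - (L • r - f' r), p - r⟫ := by
    intro p r
    have e : (L • p - f' p) - (L • r - f' r) = L • (p - r) - (f' p - f' r) := by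
      rw [smul_sub]; abel
    rw [e, inner_sub_left, real_inner_smul_left, real_inner_self_eq_norm_sq]
    have hcs : ⟪f' p - f' r, p - r⟫ ≤ ‖f' p - f' r‖ * ‖p - r‖ := real_inner_le_norm _ _
    have hlip := hLip p r
    nlinarith [norm_nonneg (p - r), norm_nonneg (f' p - f' r)]
  have hqc := convexOn_of_monotone_grad _ _ hqd hqm
  have tq := tangent_le _ _ hqd hqc
  have D2 : ∀ a b : H, f b ≤ f a + ⟪f' a, b - a⟫ + L / 2 * ‖b - a‖ ^ 2 := by
    intro a b
    have h := tq a b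
    simp only [inner_sub_left, real_inner_smul_left] at h
    have e1 : ‖b - a‖ ^ 2 = ‖b‖ ^ 2 - 2 * ⟪a, b⟫ + ‖a‖ ^ 2 := by
      rw [norm_sub_sq_real, real_inner_comm]
    have e2 : ⟪a, b - a⟫ = ⟪a, b⟫ - ‖a‖ ^ 2 := by
      rw [inner_sub_right, real_inner_self_eq_norm_sq]
    rw [e2] at h
    rw [e1]
    linarith
  have hρ0 : (0:ℝ) ≤ max |1 - α * m| |1 - α * L| :=
    le_trans (abs_nonneg _) (le_max_left _ _)
  constructor
  · intro x y
    have hk := key0 m L hm hmL f f' D1 D2 y x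
    have eV : ‖(f' x - f' y) - m • (x - y)‖ ^ 2
        = ‖f' x - f' y‖ ^ 2 - 2 * (m * ⟪f' x - f' y, x - y⟫) + m ^ 2 * ‖x - y‖ ^ 2 := by
      rw [norm_sub_sq_real, real_inner_smul_right, norm_smul, Real.norm_eq_abs, mul_pow, sq_abs]
    have eC : ⟪(f' x - f' y) - m • (x - y), x - y⟫
        = ⟪f' x - f' y, x - y⟫ - m * ‖x - y‖ ^ 2 := by
      rw [inner_sub_left, real_inner_smul_left, real_inner_self_eq_norm_sq]
    rw [eV, eC] at hk
    have hkey : m * L * ‖x - y‖ ^ 2 + ‖f' x - f' y‖ ^ 2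
        ≤ (m + L) * ⟪f' x - f' y, x - y⟫ := by nlinarith [hk]
    have hvec : (x - α • f' x) - (y - α • f' y) = (x - y) - α • (f' x - f' y) := by
      rw [smul_sub]; abel
    rw [hvec]
    have hT : ‖(x - y) - α • (f' x - f' y)‖ ^ 2
        = ‖x - y‖ ^ 2 - 2 * (α * ⟪f' x - f' y, x - y⟫) + α ^ 2 * ‖f' x - f' y‖ ^ 2 := by
      rw [norm_sub_sq_real, real_inner_smul_right, norm_smul, Real.norm_eq_abs, mul_pow, sq_abs,
        real_inner_comm]
    exact final_arith m L α ⟪f' x - f' y, x - y⟫ ‖f' x - f' y‖ ‖x - y‖ _ _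
      hm hmL hα hkey (real_inner_le_norm _ _) (hLip x y)
      (norm_nonneg _) (norm_nonneg _) hT (norm_nonneg _)
      (le_max_left _ _) (le_max_right _ _) hρ0
  · have ha : |1 - α * m| < 1 := abs_lt.2 ⟨by linarith, by linarith⟩
    have hb : |1 - α * L| < 1 := abs_lt.2 ⟨by linarith [mul_pos hα hL], by linarith [mul_pos hα hL]⟩
    exact max_lt ha hb
end

section
/- Let H be a real Hilbert space, X ⊆ H a nonempty closed convex set, and f : H → ℝ an m-strongly convex and L-strongly smooth function with 0 < m ≤ L. Let x* ∈ X be the minimizer of f over X. For any stepsize α with 0 < α < 2/L and any x ∈ H, ‖Π_X(x − α∇f(x)) − x*‖ ≤ ρ·‖x − x*‖, where ρ = max{|1 − αm|, |1 − αL|} < 1. -/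
open InnerProductSpace
section Helpers
variable {H : Type*} [NormedAddCommGroup H] [InnerProductSpace ℝ H] [CompleteSpace H]
lemma line_hasDerivAt_s6 {f : H → ℝ} {g : H} {x u : H} (t : ℝ)
    (h : HasGradientAt f g (x + t • u)) :
    HasDerivAt (fun s : ℝ => f (x + s • u)) (⟪g, u⟫_ℝ) t := by
  have hc : HasDerivAt (fun s : ℝ => x + s • u) u t := by
    simpa using ((hasDerivAt_id t).smul_const u).const_add x
  have hf : HasFDerivAt f (toDual ℝ H g) (x + t • u) :=
    hasGradientAt_iff_hasFDerivAt.mp h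
  have := hf.comp_hasDerivAt t hc
  simp only [toDual_apply_apply] at this
  exact this

/-- gradient inequality for convex functions -/
lemma grad_ineq {f : H → ℝ} {f' : H → H} (hdiff : ∀ x, HasGradientAt f (f' x) x)
    (hcvx : ConvexOn ℝ Set.univ f) (x y : H) :
    f x + ⟪f' x, y - x⟫_ℝ ≤ f y := by
  have hd : HasDerivAt (fun s : ℝ => f (x + s • (y - x))) (⟪f' x, y - x⟫_ℝ) 0 := by
    have := line_hasDerivAt_s6 (f := f) (g := f' (x + (0:ℝ) • (y-x))) (x := x) (u := y - x) 0
      (by simpa using hdiff _)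
    simpa using this
  set φ : ℝ → ℝ := fun s => f (x + s • (y - x)) with hφ
  have hslope : ∀ t ∈ Set.Ioc (0:ℝ) 1, slope φ 0 t ≤ f y - f x := by
    intro t ht
    have hconv : φ t ≤ (1 - t) * f x + t * f y := by
      have := hcvx.2 (Set.mem_univ x) (Set.mem_univ y)
        (by linarith [ht.2] : (0:ℝ) ≤ 1 - t) (le_of_lt ht.1) (by ring)
      calc φ t = f ((1-t) • x + t • y) := by
            simp only [hφ]; congr 1; module
        _ ≤ (1 - t) * f x + t * f y := by simpa [smul_eq_mul] using this
    have h0 : φ 0 = f x := by simp [hφ]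
    rw [slope_def_field, sub_zero, div_le_iff₀ ht.1]
    calc φ t - φ 0 ≤ (1 - t) * f x + t * f y - f x := by rw [h0]; linarith
      _ = (f y - f x) * t := by ring
  have htend : Filter.Tendsto (slope φ 0) (nhdsWithin 0 (Set.Ioi 0)) (nhds (⟪f' x, y - x⟫_ℝ)) :=
    (hasDerivAt_iff_tendsto_slope.mp hd).mono_left
      (nhdsWithin_mono 0 (by intro t ht; exact ne_of_gt ht))
  have : ⟪f' x, y - x⟫_ℝ ≤ f y - f x := by
    refine le_of_tendsto htend ?_
    filter_upwards [Ioc_mem_nhdsGT_of_mem (by norm_num : (0:ℝ) ∈ Set.Ico (0:ℝ) 1)] with t ht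
    exact hslope t ht
  linarith

/-- variational inequality at a constrained minimizer -/
lemma var_ineq {f : H → ℝ} {f' : H → H} (hdiff : ∀ x, HasGradientAt f (f' x) x)
    {X : Set H} (hXcv : Convex ℝ X) {xs : H} (hxs : xs ∈ X) (hmin : ∀ y ∈ X, f xs ≤ f y)
    {w : H} (hw : w ∈ X) : 0 ≤ ⟪f' xs, w - xs⟫_ℝ := by
  have hd : HasDerivAt (fun s : ℝ => f (xs + s • (w - xs))) (⟪f' xs, w - xs⟫_ℝ) 0 := by
    have := line_hasDerivAt_s6 (f := f) (g := f' (xs + (0:ℝ) • (w-xs))) (x := xs) (u := w - xs) 0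
      (by simpa using hdiff _)
    simpa using this
  set φ : ℝ → ℝ := fun s => f (xs + s • (w - xs)) with hφ
  have hslope : ∀ t ∈ Set.Ioc (0:ℝ) 1, (0:ℝ) ≤ slope φ 0 t := by
    intro t ht
    have hmem : xs + t • (w - xs) ∈ X := by
      have := hXcv hxs hw (by linarith [ht.2] : (0:ℝ) ≤ 1 - t) (le_of_lt ht.1) (by ring)
      convert this using 1; module
    have : φ 0 ≤ φ t := by simpa [hφ] using hmin _ hmem
    rw [slope_def_field, sub_zero]
    exact div_nonneg (by linarith) (le_of_lt ht.1)
  have htend : Filter.Tendsto (slope φ 0) (nhdsWithin 0 (Set.Ioi 0)) (nhds (⟪f' xs, w - xs⟫_ℝ)) :=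
    (hasDerivAt_iff_tendsto_slope.mp hd).mono_left
      (nhdsWithin_mono 0 (by intro t ht; exact ne_of_gt ht))
  refine ge_of_tendsto htend ?_
  filter_upwards [Ioc_mem_nhdsGT_of_mem (by norm_num : (0:ℝ) ∈ Set.Ico (0:ℝ) 1)] with t ht
  exact hslope t ht

/-- descent lemma -/
lemma descent {f : H → ℝ} {f' : H → H} {L : ℝ} (hL : 0 ≤ L)
    (hdiff : ∀ x, HasGradientAt f (f' x) x)
    (hLip : ∀ x y : H, ‖f' x - f' y‖ ≤ L * ‖x - y‖) (x y : H) :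
    f y ≤ f x + ⟪f' x, y - x⟫_ℝ + L / 2 * ‖y - x‖ ^ 2 := by
  set u := y - x with hu
  set χ : ℝ → ℝ := fun t => f (x + t • u) - t * ⟪f' x, u⟫_ℝ - L * t ^ 2 / 2 * ‖u‖ ^ 2 with hχ
  have hχd : ∀ t : ℝ, HasDerivAt χ
      (⟪f' (x + t • u), u⟫_ℝ - ⟪f' x, u⟫_ℝ - L * t * ‖u‖ ^ 2) t := by
    intro t
    have h1 := line_hasDerivAt_s6 (f := f) (g := f' (x + t • u)) (x := x) (u := u) t (hdiff _)
    have h2 : HasDerivAt (fun t : ℝ => t * ⟪f' x, u⟫_ℝ) (⟪f' x, u⟫_ℝ) t := by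
      simpa using (hasDerivAt_id t).mul_const (⟪f' x, u⟫_ℝ)
    have h3 : HasDerivAt (fun t : ℝ => L * t ^ 2 / 2 * ‖u‖ ^ 2) (L * t * ‖u‖ ^ 2) t := by
      have : HasDerivAt (fun t : ℝ => t ^ 2) (2 * t) t := by
        simpa using hasDerivAt_pow 2 t
      have := ((this.const_mul L).div_const 2).mul_const (‖u‖ ^ 2)
      exact this.congr_deriv (by ring)
    exact (h1.sub h2).sub h3
  have hanti : AntitoneOn χ (Set.Icc 0 1) := by
    apply antitoneOn_of_deriv_nonpos (convex_Icc 0 1)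
    · exact fun t _ => ((hχd t).continuousAt).continuousWithinAt
    · intro t ht
      exact ((hχd t).differentiableAt).differentiableWithinAt
    · intro t ht
      rw [interior_Icc] at ht
      rw [(hχd t).deriv]
      have hb : ⟪f' (x + t • u) - f' x, u⟫_ℝ ≤ L * t * ‖u‖ ^ 2 := by
        calc ⟪f' (x + t • u) - f' x, u⟫_ℝ ≤ ‖f' (x + t • u) - f' x‖ * ‖u‖ :=
              real_inner_le_norm _ _
          _ ≤ L * ‖(x + t • u) - x‖ * ‖u‖ := by
              gcongr; exact hLip _ _
          _ = L * (t * ‖u‖) * ‖u‖ := by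
              congr 2; rw [add_sub_cancel_left, norm_smul, Real.norm_eq_abs,
                abs_of_pos ht.1]
          _ = L * t * ‖u‖ ^ 2 := by ring
      rw [inner_sub_left] at hb
      linarith
  have := hanti (Set.mem_Icc.mpr ⟨le_refl 0, zero_le_one⟩)
    (Set.mem_Icc.mpr ⟨zero_le_one, le_refl 1⟩) zero_le_one
  simp only [hχ] at this
  simp only [one_smul, zero_smul, add_zero, one_pow, one_mul, zero_pow, mul_zero,
    zero_mul, sub_zero, zero_div] at this
  have hxy : x + u = y := by rw [hu]; abel
  rw [hxy] at this
  linarith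
lemma grad_sq (m : ℝ) (z : H) :
    HasGradientAt (fun x : H => m / 2 * ‖x‖ ^ 2) (m • z) z := by
  rw [hasGradientAt_iff_hasFDerivAt]
  have h1 : HasFDerivAt (fun x : H => ⟪x, x⟫_ℝ)
      ((fderivInnerCLM ℝ (z, z)).comp ((ContinuousLinearMap.id ℝ H).prod
        (ContinuousLinearMap.id ℝ H))) z :=
    (hasFDerivAt_id z).inner ℝ (hasFDerivAt_id z)
  have h2 := h1.const_mul (m / 2)
  convert h2 using 1
  · rfl
  · ext x; rw [real_inner_self_eq_norm_sq]
  · ext w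
    simp [fderivInnerCLM, real_inner_smul_left, real_inner_comm z w]
    ring

lemma grad_h {f : H → ℝ} {f' : H → H} (m : ℝ) (hdiff : ∀ x, HasGradientAt f (f' x) x) (z : H) :
    HasGradientAt (fun x : H => f x - m / 2 * ‖x‖ ^ 2) (f' z - m • z) z := by
  rw [hasGradientAt_iff_hasFDerivAt] at *
  have h1 := hasGradientAt_iff_hasFDerivAt.mp (hdiff z)
  have h2 := hasGradientAt_iff_hasFDerivAt.mp (grad_sq m z)
  have := h1.sub h2
  exact this.congr_fderiv (by ext w; simp [inner_sub_left])
lemma cocoercive {g : H → ℝ} {g' : H → H} {K : ℝ} (hK : 0 < K)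
    (hgrad : ∀ x y : H, g x + ⟪g' x, y - x⟫_ℝ ≤ g y)
    (hdesc : ∀ x y : H, g y ≤ g x + ⟪g' x, y - x⟫_ℝ + K / 2 * ‖y - x‖ ^ 2)
    (x y : H) : ‖g' y - g' x‖ ^ 2 ≤ K * ⟪g' y - g' x, y - x⟫_ℝ := by
  have key : ∀ a b : H, ‖g' b - g' a‖ ^ 2 ≤ 2 * K * (g b - g a - ⟪g' a, b - a⟫_ℝ) := by
    intro a b
    set d := g' b - g' a with hd
    set c : ℝ := 1 / K with hcdef
    have hc : K * c = 1 := by rw [hcdef]; field_simp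
    set w := b - c • d with hw
    have h1 := hgrad a w
    have h2 := hdesc b w
    have e1 : ⟪g' a, w - a⟫_ℝ = ⟪g' a, b - a⟫_ℝ - c * ⟪g' a, d⟫_ℝ := by
      rw [hw, show b - c • d - a = (b - a) - c • d by abel,
        inner_sub_right, real_inner_smul_right]
    have e2 : ⟪g' b, w - b⟫_ℝ = -(c * ⟪g' b, d⟫_ℝ) := by
      rw [hw, show b - c • d - b = -(c • d) by abel, inner_neg_right, real_inner_smul_right]
    have e3 : ‖w - b‖ ^ 2 = c ^ 2 * ‖d‖ ^ 2 := by
      rw [hw, show b - c • d - b = -(c • d) by abel, norm_neg, norm_smul,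
        Real.norm_eq_abs, abs_of_pos (by positivity), mul_pow]
    have e4 : ⟪g' b, d⟫_ℝ = ⟪g' a, d⟫_ℝ + ‖d‖ ^ 2 := by
      have : ⟪g' b, d⟫_ℝ - ⟪g' a, d⟫_ℝ = ‖d‖ ^ 2 := by
        rw [← inner_sub_left, ← hd, real_inner_self_eq_norm_sq]
      linarith
    rw [e1] at h1
    rw [e2, e3, e4] at h2
    have e7b : K / 2 * (c ^ 2 * ‖d‖ ^ 2) = c / 2 * ‖d‖ ^ 2 := by
      linear_combination (c / 2 * ‖d‖ ^ 2) * hc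
    have h8 : g a + ⟪g' a, b - a⟫_ℝ + c / 2 * ‖d‖ ^ 2 ≤ g b := by nlinarith [h1, h2, e7b]
    have h9 := mul_le_mul_of_nonneg_left h8 (by linarith : (0:ℝ) ≤ 2 * K)
    have e8 : 2 * K * (c / 2 * ‖d‖ ^ 2) = ‖d‖ ^ 2 := by
      linear_combination ‖d‖ ^ 2 * hc
    nlinarith [h9, e8]
  have k1 := key x y
  have k2 := key y x
  have e5 : ⟪g' y, x - y⟫_ℝ = -⟪g' y, y - x⟫_ℝ := by
    rw [← inner_neg_right]; congr 1; abel
  have e6 : ‖g' x - g' y‖ = ‖g' y - g' x‖ := norm_sub_rev _ _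
  rw [e5, e6] at k2
  rw [inner_sub_left]
  nlinarith [k1, k2]
lemma sqrt_step {a b : ℝ} (ha : 0 ≤ a) (hb : 0 ≤ b) (h : a ^ 2 ≤ b ^ 2) : a ≤ b := by
  nlinarith

set_option maxHeartbeats 1000000 in
/-- contraction of the gradient map -/
lemma grad_map_contract {m L α : ℝ} (hm : 0 < m) (hmL : m ≤ L) (hα : 0 < α)
    (hαL : α * L < 2) {u v : H}
    (hmono : m * ‖u‖ ^ 2 ≤ ⟪v, u⟫_ℝ) (hLipuv : ‖v‖ ≤ L * ‖u‖)
    (hcoco : L = m ∨ ‖v - m • u‖ ^ 2 ≤ (L - m) * ⟪v - m • u, u⟫_ℝ) :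
    ‖u - α • v‖ ≤ max |1 - α * m| |1 - α * L| * ‖u‖ := by
  have hαm : α * m ≤ α * L := mul_le_mul_of_nonneg_left hmL hα.le
  have hαm1 : 0 < α * m := mul_pos hα hm
  apply sqrt_step (norm_nonneg _)
    (mul_nonneg (le_max_of_le_left (abs_nonneg _)) (norm_nonneg _))
  rw [mul_pow]
  rcases hcoco with hLm | hc1
  · -- L = m : easy case
    have hmax : max |1 - α * m| |1 - α * L| = |1 - α * m| := by rw [hLm]; exact max_self _
    rw [hmax, sq_abs]
    rw [hLm] at hLipuv
    have hexp : ‖u - α • v‖ ^ 2 = ‖u‖ ^ 2 - 2 * (α * ⟪v, u⟫_ℝ) + α ^ 2 * ‖v‖ ^ 2 := by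
      rw [norm_sub_sq_real, real_inner_smul_right, norm_smul, Real.norm_eq_abs,
        abs_of_pos hα, mul_pow, real_inner_comm]
      try ring
    have hv2 : ‖v‖ ^ 2 ≤ m ^ 2 * ‖u‖ ^ 2 := by
      nlinarith [norm_nonneg v, norm_nonneg u, mul_le_mul_of_nonneg_left hLipuv (norm_nonneg v)]
    rw [hexp]
    nlinarith [mul_le_mul_of_nonneg_left hmono hα.le, sq_nonneg α, sq_nonneg (α*m)]
  · -- general case; w := v - m • u
    set K := L - m with hK
    set w := v - m • u with hw
    set a := 1 - α * m with ha
    have hKnn : 0 ≤ K := by rw [hK]; linarith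
    have hiuw : ⟪v - m • u, u⟫_ℝ = ⟪u, w⟫_ℝ := by rw [hw, real_inner_comm]
    rw [hiuw] at hc1
    have hc2 : ‖w‖ ≤ K * ‖u‖ := by
      rcases eq_or_lt_of_le (norm_nonneg w) with h0 | h0
      · rw [← h0]; positivity
      · have hup : ⟪u, w⟫_ℝ ≤ ‖w‖ * ‖u‖ := by
          rw [real_inner_comm]; exact real_inner_le_norm _ _
        have : ‖w‖ ^ 2 ≤ K * (‖w‖ * ‖u‖) :=
          hc1.trans (mul_le_mul_of_nonneg_left hup hKnn)
        nlinarith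
    have hc3 : ⟪u, w⟫_ℝ ≤ K * ‖u‖ ^ 2 := by
      have h1 : ⟪u, w⟫_ℝ ≤ ‖u‖ * ‖w‖ := real_inner_le_norm _ _
      nlinarith [mul_le_mul_of_nonneg_left hc2 (norm_nonneg u)]
    have hrw : u - α • v = a • u - α • w := by rw [hw, ha]; module
    have hexp : ‖u - α • v‖ ^ 2
        = a ^ 2 * ‖u‖ ^ 2 - 2 * (a * α * ⟪u, w⟫_ℝ) + α ^ 2 * ‖w‖ ^ 2 := by
      rw [hrw, norm_sub_sq_real, real_inner_smul_left, real_inner_smul_right,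
        norm_smul, norm_smul, Real.norm_eq_abs, Real.norm_eq_abs, abs_of_pos hα,
        mul_pow, mul_pow, sq_abs]
      try ring
    rw [hexp]
    have hw2 : ‖w‖ ^ 2 ≤ K ^ 2 * ‖u‖ ^ 2 := by
      nlinarith [norm_nonneg w, norm_nonneg u, mul_le_mul_of_nonneg_left hc2 (norm_nonneg w)]
    have huw0 : 0 ≤ ⟪u, w⟫_ℝ := by
      rcases eq_or_lt_of_le hKnn with h0 | h0
      · have hwz : w = 0 := by
          have : ‖w‖ ≤ 0 := by rw [← h0, zero_mul] at hc2; exact hc2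
          simpa [norm_le_zero_iff] using this
        simp [hwz]
      · nlinarith [sq_nonneg ‖w‖]
    rcases le_or_gt (α * m + α * L) 2 with hcase | hcase
    · -- ρ = a = 1 - α m ≥ 0
      have ha0 : 0 ≤ a := by rw [ha]; linarith
      have hmax : max |1 - α * m| |1 - α * L| = a := by
        have h1 : |1 - α * m| = a := by rw [ha.symm]; exact abs_of_nonneg ha0
        have h2 : |1 - α * L| ≤ a := by
          rw [abs_le, ha]; constructor <;> linarith
        rw [max_eq_left (by rw [h1]; exact h2), h1]
      rw [hmax]
      have key : α ^ 2 * ‖w‖ ^ 2 ≤ 2 * (a * α * ⟪u, w⟫_ℝ) := by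
        have h1 : α ^ 2 * ‖w‖ ^ 2 ≤ α ^ 2 * (K * ⟪u, w⟫_ℝ) :=
          mul_le_mul_of_nonneg_left hc1 (by positivity)
        have h2 : α * K ≤ 2 * a := by rw [ha, hK]; ring_nf; linarith
        have h3 : 0 ≤ α * ⟪u, w⟫_ℝ := mul_nonneg hα.le huw0
        nlinarith
      linarith [mul_nonneg (mul_nonneg ha0 hα.le) huw0]
    · -- ρ = α L - 1 ≥ 0
      have hαL1 : 1 ≤ α * L := by linarith
      have hmax : max |1 - α * m| |1 - α * L| = α * L - 1 := by
        have h1 : |1 - α * L| = α * L - 1 := by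
          rw [abs_of_nonpos (by linarith)]; ring
        have h2 : |1 - α * m| ≤ α * L - 1 := by
          rw [abs_le]; constructor <;> linarith
        rw [max_eq_right (by rw [h1]; exact h2), h1]
      rw [hmax]
      have hid : (α * L - 1) ^ 2 = a ^ 2 + α * K * (α * K - 2 * a) := by
        rw [ha, hK]; ring
      rcases le_or_gt a 0 with ha0 | ha0
      · have h1 : α ^ 2 * ‖w‖ ^ 2 ≤ α ^ 2 * (K ^ 2 * ‖u‖ ^ 2) :=
          mul_le_mul_of_nonneg_left hw2 (by positivity)
        have h2 : (a * α) * (K * ‖u‖ ^ 2) ≤ (a * α) * ⟪u, w⟫_ℝ :=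
          mul_le_mul_of_nonpos_left hc3 (mul_nonpos_iff.mpr (Or.inr ⟨ha0, hα.le⟩))
        have hid2 : (α * L - 1) ^ 2 * ‖u‖ ^ 2
            = (a ^ 2 + α * K * (α * K - 2 * a)) * ‖u‖ ^ 2 := by rw [hid]
        nlinarith [h1, h2, hid2]
      · rcases eq_or_lt_of_le hKnn with hK0 | hK0
        · have hwz : w = 0 := by
            have : ‖w‖ ≤ 0 := by rw [← hK0, zero_mul] at hc2; exact hc2
            simpa [norm_le_zero_iff] using this
          rw [hwz]
          simp only [norm_zero, inner_zero_right, mul_zero, ne_eq]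
          have hid2 : (α * L - 1) ^ 2 = a ^ 2 := by rw [hid, ← hK0]; ring
          rw [hid2]
          nlinarith [sq_nonneg (a * ‖u‖)]
        · have hαK2a : 2 * a ≤ α * K := by rw [ha, hK]; ring_nf; linarith
          have step1 : 2 * a * α * (K * (K * ‖u‖ ^ 2 - ⟪u, w⟫_ℝ))
              ≤ 2 * a * α * (K ^ 2 * ‖u‖ ^ 2 - ‖w‖ ^ 2) := by
            apply mul_le_mul_of_nonneg_left _ (by positivity)
            nlinarith
          have step2 : 0 ≤ α * (α * K - 2 * a) * (K ^ 2 * ‖u‖ ^ 2 - ‖w‖ ^ 2) := by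
            apply mul_nonneg (mul_nonneg hα.le (by linarith))
            linarith
          have step4 : 0 ≤ α ^ 2 * (K ^ 2 * ‖u‖ ^ 2) - 2 * (a * α * (K * ‖u‖ ^ 2))
              - α ^ 2 * ‖w‖ ^ 2 + 2 * (a * α * ⟪u, w⟫_ℝ) := by
            have h5 : 0 ≤ K * (α ^ 2 * (K ^ 2 * ‖u‖ ^ 2) - 2 * (a * α * (K * ‖u‖ ^ 2))
                - α ^ 2 * ‖w‖ ^ 2 + 2 * (a * α * ⟪u, w⟫_ℝ)) := by nlinarith
            exact nonneg_of_mul_nonneg_right (by linarith) hK0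
          nlinarith
/-- characterization of the metric projection -/
lemma proj_char {X : Set H} (hXcv : Convex ℝ X) {proj : H → H}
    (hproj : ∀ z : H, proj z ∈ X ∧ ∀ w ∈ X, dist z (proj z) ≤ dist z w)
    (z : H) : ∀ w ∈ X, ⟪z - proj z, w - proj z⟫_ℝ ≤ 0 := by
  have hmem := (hproj z).1
  haveI : Nonempty X := ⟨⟨proj z, hmem⟩⟩
  have hinf : ‖z - proj z‖ = ⨅ w : X, ‖z - w‖ := by
    apply le_antisymm
    · apply le_ciInf
      intro w
      have := (hproj z).2 w w.2
      rwa [dist_eq_norm, dist_eq_norm] at this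
    · exact ciInf_le ⟨0, fun _ ⟨_, h⟩ => h ▸ norm_nonneg _⟩ (⟨proj z, hmem⟩ : X)
  exact (norm_eq_iInf_iff_real_inner_le_zero hXcv hmem).mp hinf

/-- nonexpansiveness -/
lemma proj_nonexp {X : Set H} (hXcv : Convex ℝ X) {proj : H → H}
    (hproj : ∀ z : H, proj z ∈ X ∧ ∀ w ∈ X, dist z (proj z) ≤ dist z w)
    (z₁ z₂ : H) : ‖proj z₁ - proj z₂‖ ≤ ‖z₁ - z₂‖ := by
  have h1 := proj_char hXcv hproj z₁ (proj z₂) (hproj z₂).1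
  have h2 := proj_char hXcv hproj z₂ (proj z₁) (hproj z₁).1
  set p₁ := proj z₁
  set p₂ := proj z₂
  have key : ‖p₁ - p₂‖ ^ 2 ≤ ⟪z₁ - z₂, p₁ - p₂⟫_ℝ := by
    have e1 : ⟪z₁ - z₂, p₁ - p₂⟫_ℝ
        = ⟪z₁ - p₁, p₁ - p₂⟫_ℝ + ‖p₁ - p₂‖ ^ 2 + ⟪p₂ - z₂, p₁ - p₂⟫_ℝ := by
      rw [← real_inner_self_eq_norm_sq]
      rw [← inner_add_left, ← inner_add_left]
      congr 1; abel
    have e2 : 0 ≤ ⟪z₁ - p₁, p₁ - p₂⟫_ℝ := by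
      have := h1
      rw [show p₂ - p₁ = -(p₁ - p₂) by abel, inner_neg_right] at this
      linarith
    have e3 : 0 ≤ ⟪p₂ - z₂, p₁ - p₂⟫_ℝ := by
      rw [show p₂ - z₂ = -(z₂ - p₂) by abel, inner_neg_left]
      linarith
    linarith
  have hcs : ⟪z₁ - z₂, p₁ - p₂⟫_ℝ ≤ ‖z₁ - z₂‖ * ‖p₁ - p₂‖ := real_inner_le_norm _ _
  rcases eq_or_lt_of_le (norm_nonneg (p₁ - p₂)) with h0 | h0
  · rw [← h0]; exact norm_nonneg _
  · nlinarith
end Helpers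

/-- Per-iteration contraction of the projected gradient step toward the constrained
minimizer: for `f` `m`-strongly convex and `L`-strongly smooth (`0 < m ≤ L`) on a real
Hilbert space, `X` nonempty closed convex with metric projection `proj`, `xs` the
minimizer of `f` over `X`, and `0 < α < 2/L`, one has
`‖proj (x - α • f' x) - xs‖ ≤ ρ * ‖x - xs‖` with `ρ = max |1-α*m| |1-α*L| < 1`. -/
theorem projected_gradient_step_contraction
    {H : Type*} [NormedAddCommGroup H] [InnerProductSpace ℝ H] [CompleteSpace H]
    (m L α : ℝ) (hm : 0 < m) (hmL : m ≤ L) (hα : 0 < α) (hα2 : α < 2 / L)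
    (X : Set H) (hXne : X.Nonempty) (hXcl : IsClosed X) (hXcv : Convex ℝ X)
    (f : H → ℝ) (f' : H → H) (hdiff : ∀ x : H, HasGradientAt f (f' x) x)
    (hsc : ConvexOn ℝ Set.univ (fun x => f x - m / 2 * ‖x‖ ^ 2))
    (hLip : ∀ x y : H, ‖f' x - f' y‖ ≤ L * ‖x - y‖)
    (proj : H → H)
    (hproj : ∀ z : H, proj z ∈ X ∧ ∀ w ∈ X, dist z (proj z) ≤ dist z w)
    (xs : H) (hxs : xs ∈ X ∧ ∀ y ∈ X, f xs ≤ f y) :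
    (∀ x : H, ‖proj (x - α • f' x) - xs‖ ≤ max |1 - α * m| |1 - α * L| * ‖x - xs‖)
      ∧ max |1 - α * m| |1 - α * L| < 1 := by
  have hL : 0 < L := lt_of_lt_of_le hm hmL
  have hαL : α * L < 2 := by
    rw [← lt_div_iff₀ hL] at *; exact hα2
  have hαm : α * m ≤ α * L := mul_le_mul_of_nonneg_left hmL hα.le
  have hαm0 : 0 < α * m := mul_pos hα hm
  -- the h function and its gradient
  set h : H → ℝ := fun x => f x - m / 2 * ‖x‖ ^ 2 with hh
  set h' : H → H := fun z => f' z - m • z with hh'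
  have hgradh : ∀ z, HasGradientAt h (h' z) z := fun z => grad_h m hdiff z
  have hgi : ∀ x y : H, h x + ⟪h' x, y - x⟫_ℝ ≤ h y := fun x y => grad_ineq hgradh hsc x y
  -- strong monotonicity of f'
  have hmono : ∀ x y : H, m * ‖x - y‖ ^ 2 ≤ ⟪f' x - f' y, x - y⟫_ℝ := by
    intro x y
    have h1 := hgi x y
    have h2 := hgi y x
    have e1 : ⟪h' y, x - y⟫_ℝ = -⟪h' y, y - x⟫_ℝ := by
      rw [← inner_neg_right]; congr 1; abel
    rw [e1] at h2
    have h3 : ⟪h' x, y - x⟫_ℝ - ⟪h' y, y - x⟫_ℝ ≤ 0 := by linarith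
    rw [← inner_sub_left] at h3
    have e2 : h' x - h' y = (f' x - f' y) - m • (x - y) := by
      simp only [hh']; module
    rw [e2, inner_sub_left, real_inner_smul_left] at h3
    have e3 : ⟪f' x - f' y, y - x⟫_ℝ = -⟪f' x - f' y, x - y⟫_ℝ := by
      rw [← inner_neg_right]; congr 1; abel
    have e4 : ⟪x - y, y - x⟫_ℝ = -‖x - y‖ ^ 2 := by
      rw [show y - x = -(x - y) by abel, inner_neg_right, real_inner_self_eq_norm_sq]
    rw [e3, e4] at h3
    linarith
  -- descent lemma for h with constant L - m
  have hdesc : ∀ a b : H, h b ≤ h a + ⟪h' a, b - a⟫_ℝ + (L - m) / 2 * ‖b - a‖ ^ 2 := by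
    intro a b
    have hf := descent hL.le hdiff hLip a b
    have hid : ‖b‖ ^ 2 = ‖a‖ ^ 2 + 2 * ⟪a, b - a⟫_ℝ + ‖b - a‖ ^ 2 := by
      have hb : b = a + (b - a) := by abel
      calc ‖b‖ ^ 2 = ‖a + (b - a)‖ ^ 2 := by rw [← hb]
        _ = ‖a‖ ^ 2 + 2 * ⟪a, b - a⟫_ℝ + ‖b - a‖ ^ 2 := norm_add_sq_real _ _
    simp only [hh, hh', inner_sub_left, real_inner_smul_left]
    nlinarith [hf, hid]
  -- fixed point : proj (xs - α • f' xs) = xs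
  have hfix : proj (xs - α • f' xs) = xs := by
    set z := xs - α • f' xs with hz
    set p := proj z with hp
    have hchar := proj_char hXcv hproj z xs hxs.1
    rw [← hp] at hchar
    have hvi : 0 ≤ ⟪f' xs, p - xs⟫_ℝ :=
      var_ineq hdiff hXcv hxs.1 hxs.2 (hproj z).1
    have e1 : ⟪z - xs, p - xs⟫_ℝ = -(α * ⟪f' xs, p - xs⟫_ℝ) := by
      rw [hz, show xs - α • f' xs - xs = -(α • f' xs) by abel, inner_neg_left,
        real_inner_smul_left]
    have key : ‖xs - p‖ ^ 2 ≤ 0 := by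
      have e2 : ‖xs - p‖ ^ 2 = ⟪z - p, xs - p⟫_ℝ + ⟪z - xs, p - xs⟫_ℝ := by
        rw [← real_inner_self_eq_norm_sq]
        rw [show p - xs = -(xs - p) by abel, inner_neg_right, ← sub_eq_add_neg,
          ← inner_sub_left, show z - p - (z - xs) = xs - p by abel]
      rw [e2]
      have := hchar
      have h4 : ⟪z - xs, p - xs⟫_ℝ ≤ 0 := by rw [e1]; nlinarith
      linarith
    have : xs - p = 0 := by
      have : ‖xs - p‖ = 0 := by nlinarith [norm_nonneg (xs - p)]
      simpa [norm_eq_zero] using this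
    have : p = xs := by
      have := sub_eq_zero.mp this; exact this.symm
    rw [hp] at this; exact this
  constructor
  · intro x
    have hne := proj_nonexp hXcv hproj (x - α • f' x) (xs - α • f' xs)
    rw [hfix] at hne
    have hrw : (x - α • f' x) - (xs - α • f' xs) = (x - xs) - α • (f' x - f' xs) := by
      module
    rw [hrw] at hne
    have hcontr : ‖(x - xs) - α • (f' x - f' xs)‖
        ≤ max |1 - α * m| |1 - α * L| * ‖x - xs‖ := by
      apply grad_map_contract hm hmL hα hαL
      · exact hmono x xs
      · exact hLip x xs
      · rcases eq_or_lt_of_le hmL with hLm | hLm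
        · exact Or.inl hLm.symm
        · right
          have hK : (0:ℝ) < L - m := by linarith
          have := cocoercive hK hgi hdesc xs x
          have e5 : h' x - h' xs = (f' x - f' xs) - m • (x - xs) := by
            simp only [hh']; module
          rwa [e5] at this
    exact hne.trans hcontr
  · apply max_lt
    · rw [abs_lt]; constructor <;> linarith
    · rw [abs_lt]; constructor <;> linarith
end

section
/- Let H be a real Hilbert space and f : H → ℝ be m-strongly convex (m > 0) and lower semicontinuous, with minimizer x* over H. Fix α > 0 and x ∈ H, and let y ∈ H be the minimizer over H of the function u ↦ f(u) + (1/(2α))·‖u − x‖² (the proximal point of x). Then ‖y − x*‖ ≤ (1/(1 + αm))·‖x − x*‖. -/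
open Filter Topology

/-- At a global minimizer, an `m`-strongly convex function grows at least quadratically. -/
lemma strong_min_growth {H : Type*} [NormedAddCommGroup H] [InnerProductSpace ℝ H]
    (c : ℝ) (hc : 0 ≤ c) (F : H → ℝ)
    (hF : StrongConvexOn (Set.univ : Set H) c F)
    (z : H) (hz : ∀ u : H, F z ≤ F u) (u : H) :
    F z + c / 2 * ‖u - z‖ ^ 2 ≤ F u := by
  have key : ∀ t : ℝ, 0 < t → t < 1 →
      F z + (1 - t) * (c / 2 * ‖u - z‖ ^ 2) ≤ F u := by
    intro t ht ht1
    have h := hF.2 (Set.mem_univ u) (Set.mem_univ z) ht.le (by linarith : (0:ℝ) ≤ 1 - t)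
      (by ring)
    have hmin := hz (t • u + (1 - t) • z)
    simp only [smul_eq_mul] at h
    nlinarith [hmin, h]
  have hlim : Tendsto (fun t : ℝ => F z + (1 - t) * (c / 2 * ‖u - z‖ ^ 2)) (𝓝[>] 0)
      (𝓝 (F z + (1 - 0) * (c / 2 * ‖u - z‖ ^ 2))) := by
    apply Tendsto.mono_left _ nhdsWithin_le_nhds
    exact (tendsto_const_nhds.add (((tendsto_const_nhds.sub tendsto_id).mul
      tendsto_const_nhds)))
  have : F z + (1 - 0) * (c / 2 * ‖u - z‖ ^ 2) ≤ F u := by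
    refine le_of_tendsto hlim ?_
    filter_upwards [Ioo_mem_nhdsGT_of_mem (by norm_num : (0:ℝ) ∈ Set.Ico 0 1)] with t ht
    exact key t ht.1 ht.2
  linarith

/-- Contraction of the proximal point step: for `f : H → ℝ` `m`-strongly convex (`m > 0`)
and lower semicontinuous on a real Hilbert space, with minimizer `xs` over `H`, and `y`
the proximal point of `x` (the minimizer of `u ↦ f u + ‖u - x‖² / (2α)`, `α > 0`), one has
`‖y - xs‖ ≤ (1 / (1 + α*m)) * ‖x - xs‖`. -/
theorem proximal_point_contraction
    {H : Type*} [NormedAddCommGroup H] [InnerProductSpace ℝ H] [CompleteSpace H]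
    (m α : ℝ) (hm : 0 < m) (hα : 0 < α)
    (f : H → ℝ)
    (hsc : ConvexOn ℝ Set.univ (fun x => f x - m / 2 * ‖x‖ ^ 2))
    (hlsc : LowerSemicontinuous f)
    (xs : H) (hxs : ∀ u : H, f xs ≤ f u)
    (x y : H)
    (hy : ∀ u : H, f y + 1 / (2 * α) * ‖y - x‖ ^ 2 ≤ f u + 1 / (2 * α) * ‖u - x‖ ^ 2) :
    ‖y - xs‖ ≤ 1 / (1 + α * m) * ‖x - xs‖ := by
  -- f is m-strongly convex
  have hfstrong : StrongConvexOn (Set.univ : Set H) m f :=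
    strongConvexOn_iff_convex.2 hsc
  -- g := f + (1/(2α)) ‖· - x‖² is (m + 1/α)-strongly convex
  set g : H → ℝ := fun u => f u + 1 / (2 * α) * ‖u - x‖ ^ 2 with hg
  have hgstrong : StrongConvexOn (Set.univ : Set H) (m + 1 / α) g := by
    rw [strongConvexOn_iff_convex]
    have heq : (fun u : H => g u - (m + 1 / α) / 2 * ‖u‖ ^ 2)
        = fun u : H => (f u - m / 2 * ‖u‖ ^ 2) +
          (1 / (2 * α) * ‖x‖ ^ 2 - 1 / α * inner ℝ u x) := by
      funext u
      have h1 : ‖u - x‖ ^ 2 = ‖u‖ ^ 2 - 2 * inner ℝ u x + ‖x‖ ^ 2 :=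
        norm_sub_sq_real u x
      simp only [hg, h1]
      field_simp
      ring
    rw [heq]
    refine hsc.add ⟨convex_univ, ?_⟩
    intro u _ v _ a b ha hb hab
    simp only [smul_eq_mul, inner_add_left, real_inner_smul_left]
    have : a * (1 / (2 * α) * ‖x‖ ^ 2) + b * (1 / (2 * α) * ‖x‖ ^ 2)
        = 1 / (2 * α) * ‖x‖ ^ 2 := by rw [← add_mul, hab]; ring
    nlinarith [this]
  -- strong growth at xs for f, and at y for g
  have h1 := strong_min_growth m hm.le f hfstrong xs hxs y
  have h2 := strong_min_growth (m + 1 / α) (by positivity) g hgstrong y hy xs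
  simp only [hg] at h2
  -- abbreviations
  have ha : (0:ℝ) ≤ ‖y - xs‖ := norm_nonneg _
  have hcn : (0:ℝ) ≤ ‖y - x‖ := norm_nonneg _
  have hbn : (0:ℝ) ≤ ‖x - xs‖ := norm_nonneg _
  have hsymm : ‖xs - y‖ = ‖y - xs‖ := norm_sub_rev _ _
  have hsymm2 : ‖xs - x‖ = ‖x - xs‖ := norm_sub_rev _ _
  rw [hsymm, hsymm2] at h2
  -- combined inequality: (1 + 2αm) a² + c² ≤ b²
  have hcomb : (1 + 2 * α * m) * ‖y - xs‖ ^ 2 + ‖y - x‖ ^ 2 ≤ ‖x - xs‖ ^ 2 := by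
    have hα' : 0 < 2 * α := by linarith
    have hsum := add_le_add h1 h2
    rw [← sub_nonneg]
    have h3 : ‖x - xs‖ ^ 2 - ((1 + 2 * α * m) * ‖y - xs‖ ^ 2 + ‖y - x‖ ^ 2)
        = (2 * α) * (1 / (2 * α) * ‖x - xs‖ ^ 2 - (m / 2 * ‖y - xs‖ ^ 2
          + 1 / (2 * α) * ‖y - x‖ ^ 2 + (m + 1 / α) / 2 * ‖y - xs‖ ^ 2)) := by
      field_simp
      ring
    rw [h3]
    apply mul_nonneg hα'.le
    linarith
  -- triangle inequality
  have htri : ‖x - xs‖ ≤ ‖y - x‖ + ‖y - xs‖ := by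
    have := dist_triangle x y xs
    simpa [dist_eq_norm, norm_sub_rev x y] using this
  have h1αm : (0:ℝ) < 1 + α * m := by nlinarith [mul_pos hα hm]
  rw [one_div, inv_mul_eq_div, le_div_iff₀ h1αm]
  -- b ≥ a
  have hba : ‖y - xs‖ ≤ ‖x - xs‖ := by nlinarith [hcomb, mul_pos hα hm, sq_nonneg (‖y - xs‖)]
  have hc1 : (0:ℝ) ≤ ‖y - x‖ - (‖x - xs‖ - ‖y - xs‖) := by linarith
  have hc2 : (0:ℝ) ≤ ‖y - x‖ + (‖x - xs‖ - ‖y - xs‖) := by linarith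
  nlinarith [hcomb, mul_nonneg hc1 hc2, mul_pos hα hm, ha,
    mul_nonneg (mul_nonneg hα.le hm.le) ha, sq_nonneg (‖x - xs‖ - (1 + α * m) * ‖y - xs‖)]
end

section
/- Let H be a real Hilbert space, X ⊆ H a nonempty closed convex set, and f : H × ℝ → ℝ such that for each t the function f(·; t) is m-strongly convex and L-strongly smooth (0 < m ≤ L), and for each x the map t ↦ ∇_x f(x; t) is Lipschitz with constant C₀ (uniformly in x). Let x*(t) denote the minimizer of f(·;t) over X, fix a sampling period h > 0 and sampling times t_k = k·h, fix 0 < α < 2/L and an integer C ≥ 1, and generate x_k from x_{k−1} by C iterations of y ↦ Π_X(y − α∇_x f(y; t_k)) starting from x_{k−1}. Then limsup_{k→∞} ‖x_k − x*(t_k)‖ ≤ ρ^C·(h·C₀/m)/(1 − ρ^C), where ρ = max{|1 − αm|, |1 − αL|} < 1; in particular the asymptotic tracking error is O(h), linear in the sampling period. -/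
open Set Filter

section Aux

variable {H : Type*} [NormedAddCommGroup H] [InnerProductSpace ℝ H] [CompleteSpace H]

local notation "⟪" x ", " y "⟫" => @inner ℝ _ _ x y

/-- derivative along a line -/
lemma pathD {F : H → ℝ} {G : H → H} (hF : ∀ z, HasGradientAt F (G z) z)
    (x v : H) (s : ℝ) :
    HasDerivAt (fun r : ℝ => F (x + r • v)) ⟪G (x + s • v), v⟫ s := by
  have hp : HasDerivAt (fun r : ℝ => x + r • v) v s := by
    simpa using ((hasDerivAt_id s).smul_const v).const_add x
  have := (hF (x + s • v)).hasFDerivAt.comp_hasDerivAt s hp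
  exact this

lemma lineD {F : H → ℝ} {G : H → H} (hF : ∀ z, HasGradientAt F (G z) z)
    (a c : ℝ) (w x v : H) (s : ℝ) :
    HasDerivAt (fun r : ℝ => a * F (x + r • v) + c / 2 * ‖x + r • v‖ ^ 2 + ⟪w, x + r • v⟫)
      (a * ⟪G (x + s • v), v⟫ + c * ⟪x + s • v, v⟫ + ⟪w, v⟫) s := by
  have hp : HasDerivAt (fun r : ℝ => x + r • v) v s := by
    simpa using ((hasDerivAt_id s).smul_const v).const_add x
  have h1 : HasDerivAt (fun r : ℝ => F (x + r • v)) ⟪G (x + s • v), v⟫ s := pathD hF x v s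
  have h2 : HasDerivAt (fun r : ℝ => ‖x + r • v‖ ^ 2) (2 * ⟪x + s • v, v⟫) s := by
    have h := hp.inner ℝ hp
    have he : (fun r : ℝ => (⟪x + r • v, x + r • v⟫ : ℝ)) = fun r : ℝ => ‖x + r • v‖ ^ 2 := by
      funext r; exact real_inner_self_eq_norm_sq _
    rw [he] at h
    refine h.congr_deriv ?_
    rw [real_inner_comm (x + s • v) v]; ring
  have h3 : HasDerivAt (fun r : ℝ => (⟪w, x + r • v⟫ : ℝ)) ⟪w, v⟫ s := by
    simpa using (hasDerivAt_const s w).inner ℝ hp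
  have := ((h1.const_mul a).add (h2.const_mul (c / 2))).add h3
  refine this.congr_deriv ?_
  ring

/-- first-order inequality for convex functions of combined shape -/
lemma masterIneq {F : H → ℝ} {G : H → H} (hF : ∀ z, HasGradientAt F (G z) z)
    (a c : ℝ) (w : H)
    (hcv : ConvexOn ℝ Set.univ (fun z => a * F z + c / 2 * ‖z‖ ^ 2 + ⟪w, z⟫)) (x y : H) :
    (a * F x + c / 2 * ‖x‖ ^ 2 + ⟪w, x⟫) +
      (a * ⟪G x, y - x⟫ + c * ⟪x, y - x⟫ + ⟪w, y - x⟫) ≤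
      a * F y + c / 2 * ‖y‖ ^ 2 + ⟪w, y⟫ := by
  set v := y - x with hv
  have hcu : ConvexOn ℝ Set.univ
      (fun r : ℝ => a * F (x + r • v) + c / 2 * ‖x + r • v‖ ^ 2 + ⟪w, x + r • v⟫) := by
    have h2 := hcv.comp_affineMap ((AffineMap.lineMap x y : ℝ →ᵃ[ℝ] H))
    have he : ((fun z => a * F z + c / 2 * ‖z‖ ^ 2 + ⟪w, z⟫) ∘ ((AffineMap.lineMap x y : ℝ →ᵃ[ℝ] H)))
        = fun r : ℝ => a * F (x + r • v) + c / 2 * ‖x + r • v‖ ^ 2 + ⟪w, x + r • v⟫ := by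
      funext r
      have : ((AffineMap.lineMap x y : ℝ →ᵃ[ℝ] H)) r = x + r • v := by
        rw [AffineMap.lineMap_apply_module]
        rw [hv]; rw [smul_sub, sub_smul, one_smul]; abel
      simp only [Function.comp_apply]
      rw [this]
    rw [he] at h2
    simpa using h2
  have hu0 := lineD hF a c w x v 0
  have key := hcu.le_slope_of_hasDerivAt (Set.mem_univ (0:ℝ)) (Set.mem_univ (1:ℝ)) one_pos hu0
  rw [slope_def_field] at key
  have e1 : x + (1:ℝ) • v = y := by rw [one_smul, hv]; abel
  have e0 : x + (0:ℝ) • v = x := by simp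
  rw [e1, e0] at key
  simp only [sub_zero, div_one] at key
  linarith

/-- `-F + c/2‖·‖² + linear` is convex when `G = ∇F` is `c`-Lipschitz. -/
lemma smoothConvex {F : H → ℝ} {G : H → H} (hF : ∀ z, HasGradientAt F (G z) z)
    (c : ℝ) (hc0 : 0 ≤ c) (hLip : ∀ x y, ‖G x - G y‖ ≤ c * ‖x - y‖) (w : H) :
    ConvexOn ℝ Set.univ (fun z => (-1) * F z + c / 2 * ‖z‖ ^ 2 + ⟪w, z⟫) := by
  refine ⟨convex_univ, ?_⟩
  intro p _ q _ aa bb haa hbb hab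
  set v := q - p with hvdef
  set u : ℝ → ℝ := fun r => (-1) * F (p + r • v) + c / 2 * ‖p + r • v‖ ^ 2 + ⟪w, p + r • v⟫
    with hudef
  have hd : ∀ s : ℝ, HasDerivAt u
      ((-1) * ⟪G (p + s • v), v⟫ + c * ⟪p + s • v, v⟫ + ⟪w, v⟫) s :=
    fun s => lineD hF (-1) c w p v s
  have hdiffu : Differentiable ℝ u := fun s => (hd s).differentiableAt
  have hderiv : deriv u = fun s =>
      (-1) * ⟪G (p + s • v), v⟫ + c * ⟪p + s • v, v⟫ + ⟪w, v⟫ :=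
    funext fun s => (hd s).deriv
  have hmono : Monotone (deriv u) := by
    rw [hderiv]
    intro s r hsr
    dsimp only
    have e : (p + r • v) - (p + s • v) = (r - s) • v := by
      rw [sub_smul]; abel
    have key : ⟪G (p + r • v) - G (p + s • v), v⟫ ≤ c * ((r - s) * (‖v‖ * ‖v‖)) := by
      calc ⟪G (p + r • v) - G (p + s • v), v⟫ ≤ ‖G (p + r • v) - G (p + s • v)‖ * ‖v‖ :=
            real_inner_le_norm _ _
        _ ≤ (c * ‖(p + r • v) - (p + s • v)‖) * ‖v‖ :=
            mul_le_mul_of_nonneg_right (hLip _ _) (norm_nonneg v)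
        _ = c * ((r - s) * (‖v‖ * ‖v‖)) := by
            rw [e, norm_smul, Real.norm_eq_abs, abs_of_nonneg (sub_nonneg.2 hsr)]; ring
    have eGl : ⟪G (p + r • v), v⟫ - ⟪G (p + s • v), v⟫
        = ⟪G (p + r • v) - G (p + s • v), v⟫ := (inner_sub_left _ _ _).symm
    have eI : ⟪p + r • v, v⟫ - ⟪p + s • v, v⟫ = (r - s) * (‖v‖ * ‖v‖) := by
      rw [← inner_sub_left, e, real_inner_smul_left, real_inner_self_eq_norm_sq]; ring
    have hc2 : c * (⟪p + r • v, v⟫ - ⟪p + s • v, v⟫) = c * ((r - s) * (‖v‖ * ‖v‖)) := by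
      rw [eI]
    linarith [key, eGl, hc2]
  have hcu : ConvexOn ℝ Set.univ u := hmono.convexOn_univ_of_deriv hdiffu
  have h4 := hcu.2 (Set.mem_univ (0:ℝ)) (Set.mem_univ (1:ℝ)) haa hbb hab
  have h4' : u bb ≤ aa * u 0 + bb * u 1 := by simpa [smul_eq_mul] using h4
  have e3 : aa • p + bb • q = p + bb • v := by
    have haa' : aa = 1 - bb := by linarith
    rw [haa', hvdef]; simp [smul_sub, sub_smul]; abel
  have e0 : u 0 = (-1) * F p + c / 2 * ‖p‖ ^ 2 + ⟪w, p⟫ := by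
    rw [hudef]; simp
  have e1 : u 1 = (-1) * F q + c / 2 * ‖q‖ ^ 2 + ⟪w, q⟫ := by
    rw [hudef]; simp only [one_smul, hvdef]
    have : p + (q - p) = q := by abel
    rw [this]
  show (-1) * F (aa • p + bb • q) + c / 2 * ‖aa • p + bb • q‖ ^ 2 + ⟪w, aa • p + bb • q⟫ ≤
    aa • ((-1) * F p + c / 2 * ‖p‖ ^ 2 + ⟪w, p⟫) + bb • ((-1) * F q + c / 2 * ‖q‖ ^ 2 + ⟪w, q⟫)
  rw [e3]
  simp only [smul_eq_mul]
  rw [e0, e1] at h4'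
  exact h4'

/-- `F - m/2‖·‖² + linear` convex from strong convexity assumption. -/
lemma philin {F : H → ℝ} {m : ℝ}
    (hφ : ConvexOn ℝ Set.univ (fun z => F z - m / 2 * ‖z‖ ^ 2)) (w : H) :
    ConvexOn ℝ Set.univ (fun z => 1 * F z + (-m) / 2 * ‖z‖ ^ 2 + ⟪w, z⟫) := by
  have hlin : ConvexOn ℝ Set.univ (fun z : H => (⟪w, z⟫ : ℝ)) := by
    refine ⟨convex_univ, ?_⟩
    intro p _ q _ aa bb _ _ _
    refine le_of_eq ?_
    simp [inner_add_right, real_inner_smul_right, smul_eq_mul]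
  have hs := hφ.add hlin
  have he : (fun z => 1 * F z + (-m) / 2 * ‖z‖ ^ 2 + ⟪w, z⟫)
      = fun z => (F z - m / 2 * ‖z‖ ^ 2) + ⟪w, z⟫ := by
    funext z; ring
  rw [he]
  exact hs

/-- right-endpoint minimum gives nonnegative derivative -/
lemma derivNonneg {u : ℝ → ℝ} {d : ℝ} (hu : HasDerivAt u d 0)
    (hmin : ∀ s ∈ Set.Ioc (0:ℝ) 1, u 0 ≤ u s) : 0 ≤ d := by
  have h1 : HasDerivWithinAt u d (Set.Ioi 0) 0 := hu.hasDerivWithinAt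
  rw [hasDerivWithinAt_iff_tendsto_slope] at h1
  have hS : Set.Ioi (0:ℝ) \ {0} = Set.Ioi 0 := by
    apply Set.diff_singleton_eq_self; simp
  rw [hS] at h1
  refine ge_of_tendsto h1 ?_
  filter_upwards [Ioc_mem_nhdsGT (zero_lt_one (α := ℝ))] with s hs
  rw [slope_def_field]
  have hm2 := hmin s hs
  have hspos : 0 < s := hs.1
  rw [sub_zero]
  exact div_nonneg (by linarith) hspos.le

end Aux


local notation "⟪" x ", " y "⟫" => @inner ℝ _ _ x y

set_option maxHeartbeats 1000000 in
/-- Running projected gradient under the time-Lipschitz gradient condition: with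
`f(·;t)` `m`-strongly convex and `L`-strongly smooth (`0 < m ≤ L`), gradient `g t`
`C₀`-Lipschitz in `t` uniformly in `x`, sampling times `t_k = k*h` (`h > 0`),
`0 < α < 2/L`, and `C ≥ 1` projected gradient iterations per sample onto the nonempty
closed convex set `X`, the asymptotic tracking error is bounded by
`ρ^C * (h*C₀/m) / (1 - ρ^C)` with `ρ = max |1-α*m| |1-α*L| < 1`, i.e. it is `O(h)`. -/
theorem running_projected_gradient_tracking_time_lipschitz
    {H : Type*} [NormedAddCommGroup H] [InnerProductSpace ℝ H] [CompleteSpace H]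
    (m L α C₀ h ρ : ℝ) (C : ℕ)
    (hm : 0 < m) (hmL : m ≤ L) (hα : 0 < α) (hα2 : α < 2 / L) (hh : 0 < h) (hC : 1 ≤ C)
    (hρ : ρ = max |1 - α * m| |1 - α * L|)
    (X : Set H) (hXne : X.Nonempty) (hXcl : IsClosed X) (hXcv : Convex ℝ X)
    (f : ℝ → H → ℝ) (g : ℝ → H → H)
    (hdiff : ∀ (t : ℝ) (x : H), HasGradientAt (f t) (g t x) x)
    (hsc : ∀ t : ℝ, ConvexOn ℝ Set.univ (fun x => f t x - m / 2 * ‖x‖ ^ 2))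
    (hLx : ∀ (t : ℝ) (x y : H), ‖g t x - g t y‖ ≤ L * ‖x - y‖)
    (hLt : ∀ (x : H) (t₁ t₂ : ℝ), ‖g t₁ x - g t₂ x‖ ≤ C₀ * |t₁ - t₂|)
    (proj : H → H)
    (hproj : ∀ z : H, proj z ∈ X ∧ ∀ w ∈ X, dist z (proj z) ≤ dist z w)
    (xs : ℝ → H)
    (hxs : ∀ t : ℝ, xs t ∈ X ∧ ∀ y ∈ X, f t (xs t) ≤ f t y)
    (x : ℕ → H)
    (hx : ∀ k : ℕ, 1 ≤ k →
      x k = (fun y => proj (y - α • g ((k : ℝ) * h) y))^[C] (x (k - 1))) :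
    ρ < 1 ∧
    Filter.limsup (fun k : ℕ => ‖x k - xs ((k : ℝ) * h)‖) Filter.atTop
      ≤ ρ ^ C * (h * C₀ / m) / (1 - ρ ^ C) := by
  obtain ⟨x₀, hx₀⟩ := hXne
  have hL : 0 < L := hm.trans_le hmL
  have hαL : α * L < 2 := (lt_div_iff₀ hL).mp hα2
  have hαm : 0 < α * m := mul_pos hα hm
  have hαmL : α * m ≤ α * L := mul_le_mul_of_nonneg_left hmL hα.le
  have hρ0 : 0 ≤ ρ := hρ ▸ le_trans (abs_nonneg _) (le_max_left _ _)
  have hρ1 : ρ < 1 := by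
    rw [hρ]
    apply max_lt <;> rw [abs_lt] <;> constructor <;> nlinarith
  have hC₀ : 0 ≤ C₀ := by
    have h1 := hLt x₀ 0 1
    have h2 := norm_nonneg (g 0 x₀ - g 1 x₀)
    simp at h1
    linarith
  -- strong monotonicity of the gradient
  have mono : ∀ (t : ℝ) (p q : H), m * ‖p - q‖ ^ 2 ≤ ⟪g t p - g t q, p - q⟫ := by
    intro t p q
    have hcφ := philin (hsc t) (0 : H)
    have h1 := masterIneq (hdiff t) 1 (-m) 0 hcφ p q
    have h2 := masterIneq (hdiff t) 1 (-m) 0 hcφ q p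
    simp only [inner_zero_left, add_zero, one_mul] at h1 h2
    have eA : ⟪g t p, q - p⟫ + ⟪g t q, p - q⟫ = -(⟪g t p - g t q, p - q⟫) := by
      rw [inner_sub_left, show q - p = -(p - q) from (neg_sub p q).symm, inner_neg_right]
      ring
    have eB : ⟪p, q - p⟫ + ⟪q, p - q⟫ = -‖p - q‖ ^ 2 := by
      rw [← real_inner_self_eq_norm_sq, inner_sub_left,
        show q - p = -(p - q) from (neg_sub p q).symm, inner_neg_right]
      ring
    have eB' : (-m) * ⟪p, q - p⟫ + (-m) * ⟪q, p - q⟫ = m * ‖p - q‖ ^ 2 := by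
      linear_combination (-m) * eB
    linarith [h1, h2, eA, eB']
  -- cocoercivity
  have coco : ∀ (t : ℝ) (p q : H),
      m * L * ‖q - p‖ ^ 2 + ‖g t q - g t p‖ ^ 2 ≤ (m + L) * ⟪g t q - g t p, q - p⟫ := by
    intro t p q
    rcases eq_or_lt_of_le hmL with hEq | hlt
    · subst hEq
      have h1 := mono t q p
      have h2 := hLx t q p
      have h3 := real_inner_le_norm (g t q - g t p) (q - p)
      have h4 := mul_self_le_mul_self (norm_nonneg (g t q - g t p)) h2
      have h5 := mul_le_mul_of_nonneg_left h1 (by linarith : (0:ℝ) ≤ 2 * m)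
      nlinarith [norm_nonneg (q - p), norm_nonneg (g t q - g t p)]
    · have hκ : 0 < L - m := by linarith
      have hκ' : L - m ≠ 0 := ne_of_gt hκ
      have hcΘ : ∀ w0 : H,
          ConvexOn ℝ Set.univ (fun z => (-1) * f t z + L / 2 * ‖z‖ ^ 2 + ⟪w0, z⟫) :=
        fun w0 => smoothConvex (hdiff t) L hL.le (hLx t) w0
      have key : ∀ p q : H,
          (f t p - m / 2 * ‖p‖ ^ 2 - ⟪g t p - m • p, p⟫) ≤
            (f t q - m / 2 * ‖q‖ ^ 2 - ⟪g t p - m • p, q⟫) -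
              (2 * (L - m))⁻¹ * ‖(g t q - m • q) - (g t p - m • p)‖ ^ 2 := by
        intro p q
        set w0 : H := g t p - m • p with hw0
        set D : H := (g t q - m • q) - w0 with hD
        set w' : H := q - (L - m)⁻¹ • D with hw'
        have hch := philin (hsc t) (-w0)
        have hminh : ∀ z : H, (1 * f t p + (-m) / 2 * ‖p‖ ^ 2 + ⟪-w0, p⟫) ≤
            1 * f t z + (-m) / 2 * ‖z‖ ^ 2 + ⟪-w0, z⟫ := by
          intro z
          have h5 := masterIneq (hdiff t) 1 (-m) (-w0) hch p z
          have hz0 : 1 * ⟪g t p, z - p⟫ + (-m) * ⟪p, z - p⟫ + ⟪-w0, z - p⟫ = 0 := by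
            rw [hw0, inner_neg_left, inner_sub_left, real_inner_smul_left]
            ring
          linarith [h5, hz0]
        have h7 := hminh w'
        simp only [inner_neg_left, one_mul] at h7
        have h6 := masterIneq (hdiff t) (-1) L w0 (hcΘ w0) q w'
        have ew : w' - q = -((L - m)⁻¹ • D) := by rw [hw']; abel
        have e6 : ⟪g t q, D⟫ = ‖D‖ ^ 2 + m * ⟪q, D⟫ + ⟪w0, D⟫ := by
          have hgq : g t q = D + m • q + w0 := by rw [hD]; abel
          rw [hgq, inner_add_left, inner_add_left, real_inner_smul_left,
            real_inner_self_eq_norm_sq]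
        have eM : (-1) * ⟪g t q, w' - q⟫ + L * ⟪q, w' - q⟫ + ⟪w0, w' - q⟫
            = (L - m)⁻¹ * ‖D‖ ^ 2 - ⟪q, D⟫ := by
          rw [ew, inner_neg_right, inner_neg_right, inner_neg_right,
            real_inner_smul_right, real_inner_smul_right, real_inner_smul_right, e6]
          field_simp
          ring
        have e5 : ‖w'‖ ^ 2 = ‖q‖ ^ 2 - 2 * ((L - m)⁻¹ * ⟪q, D⟫)
            + ((L - m)⁻¹) ^ 2 * ‖D‖ ^ 2 := by
          rw [hw', norm_sub_sq_real, real_inner_smul_right, norm_smul, Real.norm_eq_abs,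
            mul_pow, sq_abs]
        have e5' : L / 2 * ‖w'‖ ^ 2 - m / 2 * ‖w'‖ ^ 2 =
            L / 2 * ‖q‖ ^ 2 - m / 2 * ‖q‖ ^ 2 - ⟪q, D⟫ + (2 * (L - m))⁻¹ * ‖D‖ ^ 2 := by
          rw [e5]
          field_simp
        have hrelD : (L - m)⁻¹ * ‖D‖ ^ 2 =
            (2 * (L - m))⁻¹ * ‖D‖ ^ 2 + (2 * (L - m))⁻¹ * ‖D‖ ^ 2 := by
          field_simp
          ring
        linarith [h6, h7, eM, e5', hrelD]
      have einner : ⟪(g t q - m • q) - (g t p - m • p), q - p⟫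
          = ⟪g t q - m • q, q⟫ - ⟪g t p - m • p, q⟫ - ⟪g t q - m • q, p⟫
            + ⟪g t p - m • p, p⟫ := by
        simp only [inner_sub_left, inner_sub_right]
        ring
      have hnrev : ‖(g t p - m • p) - (g t q - m • q)‖ = ‖(g t q - m • q) - (g t p - m • p)‖ :=
        norm_sub_rev _ _
      have h2c : 2 * (2 * (L - m))⁻¹ = (L - m)⁻¹ := by field_simp
      have bhsum : (L - m)⁻¹ * ‖(g t q - m • q) - (g t p - m • p)‖ ^ 2 ≤
          ⟪(g t q - m • q) - (g t p - m • p), q - p⟫ := by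
        have k1 := key p q
        have k2 := key q p
        rw [hnrev] at k2
        have hrelE : (L - m)⁻¹ * ‖(g t q - m • q) - (g t p - m • p)‖ ^ 2 =
            (2 * (L - m))⁻¹ * ‖(g t q - m • q) - (g t p - m • p)‖ ^ 2 +
            (2 * (L - m))⁻¹ * ‖(g t q - m • q) - (g t p - m • p)‖ ^ 2 := by
          field_simp
          ring
        linarith [k1, k2, einner, hrelE]
      have hmul := mul_le_mul_of_nonneg_left bhsum (le_of_lt hκ)
      rw [← mul_assoc, mul_inv_cancel₀ hκ', one_mul] at hmul
      have hD' : (g t q - m • q) - (g t p - m • p) = (g t q - g t p) - m • (q - p) := by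
        rw [smul_sub]; abel
      have eD1 : ⟪(g t q - m • q) - (g t p - m • p), q - p⟫
          = ⟪g t q - g t p, q - p⟫ - m * ‖q - p‖ ^ 2 := by
        rw [hD', inner_sub_left, real_inner_smul_left, real_inner_self_eq_norm_sq]
      have eD2 : ‖(g t q - m • q) - (g t p - m • p)‖ ^ 2
          = ‖g t q - g t p‖ ^ 2 - 2 * (m * ⟪g t q - g t p, q - p⟫) + m ^ 2 * ‖q - p‖ ^ 2 := by
        rw [hD', norm_sub_sq_real, real_inner_smul_right, norm_smul, Real.norm_eq_abs,
          mul_pow, sq_abs]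
      rw [eD1, eD2] at hmul
      nlinarith [hmul]
  -- contraction of the unprojected step
  have contract : ∀ (t : ℝ) (p q : H),
      ‖(p - q) - α • (g t p - g t q)‖ ≤ ρ * ‖p - q‖ := by
    intro t p q
    set u : H := p - q with hu
    set v : H := g t p - g t q with hv
    have ha : (0:ℝ) ≤ ‖u‖ := norm_nonneg u
    have hb : (0:ℝ) ≤ ‖v‖ := norm_nonneg v
    have hi1 : m * ‖u‖ ^ 2 ≤ ⟪v, u⟫ := mono t p q
    have hbL : ‖v‖ ≤ L * ‖u‖ := hLx t p q
    have hiub : ⟪v, u⟫ ≤ ‖v‖ * ‖u‖ := real_inner_le_norm v u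
    have hcoco : m * L * ‖u‖ ^ 2 + ‖v‖ ^ 2 ≤ (m + L) * ⟪v, u⟫ := coco t q p
    have hsq : ‖u - α • v‖ ^ 2 = ‖u‖ ^ 2 - 2 * (α * ⟪v, u⟫) + α ^ 2 * ‖v‖ ^ 2 := by
      rw [norm_sub_sq_real, real_inner_smul_right, norm_smul, Real.norm_eq_abs, mul_pow,
        sq_abs, real_inner_comm]
    have hρm : (1 - α * m) ^ 2 ≤ ρ ^ 2 := by
      rw [hρ]
      calc (1 - α * m) ^ 2 = |1 - α * m| ^ 2 := (sq_abs _).symm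
        _ ≤ (max |1 - α * m| |1 - α * L|) ^ 2 :=
            pow_le_pow_left₀ (abs_nonneg _) (le_max_left _ _) 2
    have hρL : (1 - α * L) ^ 2 ≤ ρ ^ 2 := by
      rw [hρ]
      calc (1 - α * L) ^ 2 = |1 - α * L| ^ 2 := (sq_abs _).symm
        _ ≤ (max |1 - α * m| |1 - α * L|) ^ 2 :=
            pow_le_pow_left₀ (abs_nonneg _) (le_max_right _ _) 2
    have hmLpos : (0:ℝ) < m + L := by linarith
    have key : ‖u - α • v‖ ^ 2 ≤ ρ ^ 2 * ‖u‖ ^ 2 := by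
      rcases le_or_gt (α * (m + L)) 2 with hc1 | hc2
      · rcases eq_or_lt_of_le ha with h0 | hapos
        · have hu0 : u = 0 := by rw [← norm_eq_zero]; linarith
          have hv0 : v = 0 := by
            have h2 := hbL
            rw [hu0] at h2
            simpa using h2
          rw [hu0, hv0]
          simp
        · have hbm : m * ‖u‖ ≤ ‖v‖ := by
            have h9 : m * ‖u‖ * ‖u‖ ≤ ‖v‖ * ‖u‖ := by nlinarith
            exact le_of_mul_le_mul_right h9 hapos
          have hint1 : 0 ≤ (2 - α * (m + L)) * (‖v‖ ^ 2 - (m * ‖u‖) ^ 2) :=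
            mul_nonneg (by linarith) (by nlinarith)
          have hA := mul_le_mul_of_nonneg_left hcoco (by linarith : (0:ℝ) ≤ 2 * α)
          have hB : 0 ≤ α * ((2 - α * (m + L)) * (‖v‖ ^ 2 - (m * ‖u‖) ^ 2)) :=
            mul_nonneg hα.le hint1
          have hmain : ‖u - α • v‖ ^ 2 ≤ (1 - α * m) ^ 2 * ‖u‖ ^ 2 := by
            nlinarith [hsq, hA, hB, hmLpos]
          calc ‖u - α • v‖ ^ 2 ≤ (1 - α * m) ^ 2 * ‖u‖ ^ 2 := hmain
            _ ≤ ρ ^ 2 * ‖u‖ ^ 2 := mul_le_mul_of_nonneg_right hρm (sq_nonneg _)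
      · have hint2 : 0 ≤ (α * (m + L) - 2) * ((L * ‖u‖) ^ 2 - ‖v‖ ^ 2) :=
          mul_nonneg (by linarith) (by nlinarith)
        have hA := mul_le_mul_of_nonneg_left hcoco (by linarith : (0:ℝ) ≤ 2 * α)
        have hB : 0 ≤ α * ((α * (m + L) - 2) * ((L * ‖u‖) ^ 2 - ‖v‖ ^ 2)) :=
          mul_nonneg hα.le hint2
        have hmain : ‖u - α • v‖ ^ 2 ≤ (1 - α * L) ^ 2 * ‖u‖ ^ 2 := by
          nlinarith [hsq, hA, hB, hmLpos]
        calc ‖u - α • v‖ ^ 2 ≤ (1 - α * L) ^ 2 * ‖u‖ ^ 2 := hmain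
          _ ≤ ρ ^ 2 * ‖u‖ ^ 2 := mul_le_mul_of_nonneg_right hρL (sq_nonneg _)
    have hfin := Real.sqrt_le_sqrt key
    rwa [Real.sqrt_sq (norm_nonneg _), show ρ ^ 2 * ‖u‖ ^ 2 = (ρ * ‖u‖) ^ 2 by ring,
      Real.sqrt_sq (mul_nonneg hρ0 ha)] at hfin
  -- variational inequality at the minimizer
  have VI : ∀ (t : ℝ) (y : H), y ∈ X → 0 ≤ ⟪g t (xs t), y - xs t⟫ := by
    intro t y hy
    set v : H := y - xs t with hvdef
    have hu : HasDerivAt (fun s : ℝ => f t (xs t + s • v)) ⟪g t (xs t + (0:ℝ) • v), v⟫ 0 :=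
      pathD (hdiff t) (xs t) v 0
    have hu' : HasDerivAt (fun s : ℝ => f t (xs t + s • v)) ⟪g t (xs t), v⟫ 0 := by
      simpa using hu
    have hd := derivNonneg hu' ?_
    · simpa using hd
    · intro s hs
      have hmem : xs t + s • v ∈ X := by
        have h1 := hXcv (hxs t).1 hy (by linarith [hs.2] : (0:ℝ) ≤ 1 - s) hs.1.le (by ring)
        have h2 : (1 - s) • xs t + s • y = xs t + s • v := by
          rw [hvdef, smul_sub, sub_smul, one_smul]; abel
        rwa [h2] at h1
      have h3 := (hxs t).2 _ hmem
      simpa using h3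
  -- projection characterization
  have projChar : ∀ (z w : H), w ∈ X → ⟪z - proj z, w - proj z⟫ ≤ 0 := by
    intro z w hw
    set p : H := proj z with hpdef
    have hc : ∀ s : ℝ, HasDerivAt (fun r : ℝ => (z - p) - r • (w - p)) (-(w - p)) s := by
      intro s
      simpa using (((hasDerivAt_id s).smul_const (w - p)).const_sub (z - p))
    have hder : HasDerivAt (fun r : ℝ => (⟪(z - p) - r • (w - p), (z - p) - r • (w - p)⟫ : ℝ))
        (-2 * ⟪z - p, w - p⟫) 0 := by
      have := (hc 0).inner ℝ (hc 0)
      have e0 : (z - p) - (0:ℝ) • (w - p) = z - p := by simp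
      rw [e0] at this
      refine this.congr_deriv ?_
      rw [inner_neg_right, inner_neg_left, real_inner_comm (w - p) (z - p)]
      ring
    have hd := derivNonneg hder ?_
    · linarith
    · intro s hs
      have hmem : p + s • (w - p) ∈ X := by
        have h1 := hXcv (hproj z).1 hw (by linarith [hs.2] : (0:ℝ) ≤ 1 - s) hs.1.le (by ring)
        have h2 : (1 - s) • p + s • w = p + s • (w - p) := by
          rw [smul_sub, sub_smul, one_smul]; abel
        rwa [h2] at h1
      have h3 := (hproj z).2 _ hmem
      rw [dist_eq_norm, dist_eq_norm] at h3
      have h4 : ‖z - p‖ ^ 2 ≤ ‖z - (p + s • (w - p))‖ ^ 2 := by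
        have := pow_le_pow_left₀ (norm_nonneg _) h3 2
        exact this
      have e1 : z - (p + s • (w - p)) = (z - p) - s • (w - p) := by abel
      have e2 : ∀ r : ℝ, (⟪(z - p) - r • (w - p), (z - p) - r • (w - p)⟫ : ℝ)
          = ‖(z - p) - r • (w - p)‖ ^ 2 := fun r => real_inner_self_eq_norm_sq _
      rw [e2, e2]
      simp only [zero_smul, sub_zero]
      rw [← e1]
      exact h4
  -- one-step contraction towards the instantaneous optimizer
  have step : ∀ (t : ℝ) (y : H), ‖proj (y - α • g t y) - xs t‖ ≤ ρ * ‖y - xs t‖ := by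
    intro t y
    set z : H := y - α • g t y with hz
    set p : H := proj z with hp
    have hpX : p ∈ X := (hproj z).1
    have hchar := projChar z (xs t) (hxs t).1
    have hVIp := VI t p hpX
    have hvec := contract t y (xs t)
    have h8 : ‖p - xs t‖ ^ 2 ≤ ⟪z - xs t, p - xs t⟫ := by
      have hne : ⟪p - z, p - xs t⟫ ≤ 0 := by
        have : ⟪p - z, p - xs t⟫ = ⟪z - p, xs t - p⟫ := by
          rw [show p - z = -(z - p) from (neg_sub z p).symm,
            show p - xs t = -(xs t - p) from (neg_sub (xs t) p).symm, inner_neg_neg]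
        rw [this]
        exact hchar
      have hexp : ⟪p - xs t, p - xs t⟫ = ⟪p - z, p - xs t⟫ + ⟪z - xs t, p - xs t⟫ := by
        rw [← inner_add_left]
        congr 1
        abel
      rw [← real_inner_self_eq_norm_sq, hexp]
      linarith
    have h9 : ⟪z - xs t, p - xs t⟫ ≤ ρ * ‖y - xs t‖ * ‖p - xs t‖ := by
      have hzdec : z - xs t = ((y - xs t) - α • (g t y - g t (xs t))) + (-(α • g t (xs t))) := by
        rw [hz, smul_sub]
        abel
      rw [hzdec, inner_add_left]
      have t1 : ⟪(y - xs t) - α • (g t y - g t (xs t)), p - xs t⟫ ≤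
          ρ * ‖y - xs t‖ * ‖p - xs t‖ := by
        calc ⟪(y - xs t) - α • (g t y - g t (xs t)), p - xs t⟫
            ≤ ‖(y - xs t) - α • (g t y - g t (xs t))‖ * ‖p - xs t‖ := real_inner_le_norm _ _
          _ ≤ (ρ * ‖y - xs t‖) * ‖p - xs t‖ :=
              mul_le_mul_of_nonneg_right hvec (norm_nonneg _)
      have t2 : ⟪-(α • g t (xs t)), p - xs t⟫ ≤ 0 := by
        rw [inner_neg_left, real_inner_smul_left]
        have := mul_nonneg hα.le hVIp
        linarith
      linarith
    rcases eq_or_lt_of_le (norm_nonneg (p - xs t)) with h0 | hpos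
    · rw [← h0]
      exact mul_nonneg hρ0 (norm_nonneg _)
    · have h10 : ‖p - xs t‖ * ‖p - xs t‖ ≤ (ρ * ‖y - xs t‖) * ‖p - xs t‖ := by nlinarith
      exact le_of_mul_le_mul_right h10 hpos
  -- iterated contraction
  have iterC : ∀ (t : ℝ) (n : ℕ) (y : H),
      ‖(fun y => proj (y - α • g t y))^[n] y - xs t‖ ≤ ρ ^ n * ‖y - xs t‖ := by
    intro t n
    induction n with
    | zero => intro y; simp
    | succ n ih =>
      intro y
      rw [Function.iterate_succ_apply']
      calc ‖proj ((fun y => proj (y - α • g t y))^[n] y -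
              α • g t ((fun y => proj (y - α • g t y))^[n] y)) - xs t‖
          ≤ ρ * ‖(fun y => proj (y - α • g t y))^[n] y - xs t‖ := step t _
        _ ≤ ρ * (ρ ^ n * ‖y - xs t‖) := mul_le_mul_of_nonneg_left (ih y) hρ0
        _ = ρ ^ (n + 1) * ‖y - xs t‖ := by ring
  -- drift of the optimizer
  have drift : ∀ t₁ t₂ : ℝ, ‖xs t₁ - xs t₂‖ ≤ C₀ / m * |t₁ - t₂| := by
    intro t₁ t₂
    have h1 := VI t₁ (xs t₂) (hxs t₂).1
    have h2 := VI t₂ (xs t₁) (hxs t₁).1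
    have h3 := mono t₁ (xs t₁) (xs t₂)
    have h4 := hLt (xs t₂) t₂ t₁
    have h5 : ⟪g t₁ (xs t₁) - g t₁ (xs t₂), xs t₁ - xs t₂⟫ ≤
        ⟪g t₂ (xs t₂) - g t₁ (xs t₂), xs t₁ - xs t₂⟫ := by
      have e1 : ⟪g t₁ (xs t₁), xs t₂ - xs t₁⟫ = -⟪g t₁ (xs t₁), xs t₁ - xs t₂⟫ := by
        rw [show xs t₂ - xs t₁ = -(xs t₁ - xs t₂) from (neg_sub _ _).symm, inner_neg_right]
      rw [inner_sub_left, inner_sub_left]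
      rw [e1] at h1
      linarith [h2]
    have h6 : ⟪g t₂ (xs t₂) - g t₁ (xs t₂), xs t₁ - xs t₂⟫ ≤
        C₀ * |t₂ - t₁| * ‖xs t₁ - xs t₂‖ := by
      calc ⟪g t₂ (xs t₂) - g t₁ (xs t₂), xs t₁ - xs t₂⟫
          ≤ ‖g t₂ (xs t₂) - g t₁ (xs t₂)‖ * ‖xs t₁ - xs t₂‖ := real_inner_le_norm _ _
        _ ≤ (C₀ * |t₂ - t₁|) * ‖xs t₁ - xs t₂‖ :=
            mul_le_mul_of_nonneg_right h4 (norm_nonneg _)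
    rcases eq_or_lt_of_le (norm_nonneg (xs t₁ - xs t₂)) with h0 | hpos
    · rw [← h0]
      positivity
    · have h7 : m * ‖xs t₁ - xs t₂‖ * ‖xs t₁ - xs t₂‖ ≤
          (C₀ * |t₂ - t₁|) * ‖xs t₁ - xs t₂‖ := by nlinarith
      have h8 := le_of_mul_le_mul_right h7 hpos
      rw [abs_sub_comm t₂ t₁] at h8
      rw [div_mul_eq_mul_div, le_div_iff₀ hm]
      linarith
  -- the error recursion
  set K : ℝ := h * C₀ / m with hK
  set q : ℝ := ρ ^ C with hq
  have hq0 : 0 ≤ q := pow_nonneg hρ0 C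
  have hq1 : q < 1 := pow_lt_one₀ hρ0 hρ1 (by omega)
  have hKnn : 0 ≤ K := by positivity
  set B : ℝ := q * K / (1 - q) with hB
  have hBnn : 0 ≤ B := by
    apply div_nonneg (mul_nonneg hq0 hKnn)
    linarith
  set E : ℕ → ℝ := fun k => ‖x k - xs ((k : ℝ) * h)‖ with hE
  have stepk : ∀ k : ℕ, 1 ≤ k → E k ≤ q * E (k - 1) + q * K := by
    intro k hk
    have h1 : E k ≤ q * ‖x (k - 1) - xs ((k : ℝ) * h)‖ := by
      rw [hE]
      simp only
      rw [hx k hk]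
      exact iterC ((k : ℝ) * h) C (x (k - 1))
    have h2 : ‖x (k - 1) - xs ((k : ℝ) * h)‖ ≤
        ‖x (k - 1) - xs (((k - 1 : ℕ) : ℝ) * h)‖ + ‖xs (((k - 1 : ℕ) : ℝ) * h) - xs ((k : ℝ) * h)‖ := by
      have := dist_triangle (x (k - 1)) (xs (((k - 1 : ℕ) : ℝ) * h)) (xs ((k : ℝ) * h))
      simpa [dist_eq_norm] using this
    have h3 : ‖xs (((k - 1 : ℕ) : ℝ) * h) - xs ((k : ℝ) * h)‖ ≤ K := by
      have hcast : ((k - 1 : ℕ) : ℝ) = (k : ℝ) - 1 := by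
        push_cast [hk]
        ring
      have habs : |((k - 1 : ℕ) : ℝ) * h - (k : ℝ) * h| = h := by
        rw [hcast]
        rw [show ((k : ℝ) - 1) * h - (k : ℝ) * h = -h by ring, abs_neg, abs_of_pos hh]
      calc ‖xs (((k - 1 : ℕ) : ℝ) * h) - xs ((k : ℝ) * h)‖
          ≤ C₀ / m * |((k - 1 : ℕ) : ℝ) * h - (k : ℝ) * h| := drift _ _
        _ = C₀ / m * h := by rw [habs]
        _ = K := by rw [hK]; ring
    have h4 : E (k - 1) = ‖x (k - 1) - xs (((k - 1 : ℕ) : ℝ) * h)‖ := rfl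
    calc E k ≤ q * ‖x (k - 1) - xs ((k : ℝ) * h)‖ := h1
      _ ≤ q * (E (k - 1) + K) := by
          apply mul_le_mul_of_nonneg_left _ hq0
          rw [h4]
          linarith [h2, h3]
      _ = q * E (k - 1) + q * K := by ring
  have bound : ∀ k : ℕ, E k ≤ q ^ k * E 0 + B := by
    intro k
    induction k with
    | zero => simp only [pow_zero, one_mul]; linarith
    | succ n ih =>
      have hk1 : 1 ≤ n + 1 := by omega
      have hstep := stepk (n + 1) hk1
      simp only [Nat.add_sub_cancel] at hstep
      have hq1' : 1 - q ≠ 0 := by linarith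
      have hBfix : q * B + q * K = B := by
        rw [hB]
        field_simp
        ring
      calc E (n + 1) ≤ q * E n + q * K := hstep
        _ ≤ q * (q ^ n * E 0 + B) + q * K := by
            have := mul_le_mul_of_nonneg_left ih hq0
            linarith
        _ = q ^ (n + 1) * E 0 + (q * B + q * K) := by ring
        _ = q ^ (n + 1) * E 0 + B := by rw [hBfix]
  have htend : Filter.Tendsto (fun k : ℕ => q ^ k * E 0 + B) Filter.atTop (nhds B) := by
    have h1 : Filter.Tendsto (fun k : ℕ => q ^ k) Filter.atTop (nhds 0) :=
      tendsto_pow_atTop_nhds_zero_of_lt_one hq0 hq1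
    have h2 := (h1.mul_const (E 0)).add_const B
    simpa using h2
  refine ⟨hρ1, ?_⟩
  have hcb : Filter.IsCoboundedUnder (· ≤ ·) Filter.atTop E :=
    Filter.isCoboundedUnder_le_of_eventually_le Filter.atTop
      (Filter.Eventually.of_forall fun k => norm_nonneg _)
  have hle : Filter.limsup E Filter.atTop ≤ Filter.limsup (fun k : ℕ => q ^ k * E 0 + B)
      Filter.atTop :=
    Filter.limsup_le_limsup (Filter.Eventually.of_forall bound) hcb htend.isBoundedUnder_le
  rw [htend.limsup_eq] at hle
  exact hle
end
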